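/- arXiv:2012.03795 — 5 statements merged into one kernel-verified Lean document; each statement's English description precedes it below -/
import Mathlib

section
/- Let h : [-1,1] → ℝ be C¹ and ε ∈ {-1,1}. A point (x₀,y₀) in the phase plane Θ = (0,∞) × (-1,1) is an equilibrium of the system, i.e. F_ε(x₀,y₀) = (0,0), if and only if y₀ = 0, 2ε·h(0) > 1, and tanh(x₀) = 1/(2ε·h(0)). In particular, when 2ε·h(0) > 1 there is exactly one equilibrium, namely (arctanh(1/(2ε·h(0))), 0), and when 2ε·h(0) ≤ 1 there are none. -/
open Filter Set

/-- The vector field `F_ε` of the phase plane system: `F_ε(x,y) =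
(y, (1-y²)/tanh x − 2ε·h(y)·√(1-y²))`. -/
noncomputable def F (h : ℝ → ℝ) (ε : ℝ) (p : ℝ × ℝ) : ℝ × ℝ :=
  (p.2, (1 - p.2 ^ 2) / Real.tanh p.1 - 2 * ε * h p.2 * Real.sqrt (1 - p.2 ^ 2))

/-- The phase plane `Θ = (0,∞) × (-1,1)`. -/
def PhasePlane : Set (ℝ × ℝ) := Set.Ioi (0 : ℝ) ×ˢ Set.Ioo (-1 : ℝ) 1

/-- `γ` is an orbit of `F_ε` on the open interval `I`: it takes values in `Θ` and solves
`γ' = F_ε ∘ γ` on `I`. -/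
def IsOrbitOn (h : ℝ → ℝ) (ε : ℝ) (γ : ℝ → ℝ × ℝ) (I : Set ℝ) : Prop :=
  IsOpen I ∧ I.OrdConnected ∧ ∀ s ∈ I, γ s ∈ PhasePlane ∧ HasDerivAt γ (F h ε (γ s)) s

/-- A maximal orbit: an orbit admitting no extension to a solution on a strictly
larger interval. -/
def IsMaxOrbitOn (h : ℝ → ℝ) (ε : ℝ) (γ : ℝ → ℝ × ℝ) (I : Set ℝ) : Prop :=
  IsOrbitOn h ε γ I ∧
    ∀ (δ : ℝ → ℝ × ℝ) (J : Set ℝ), IsOrbitOn h ε δ J → I ⊆ J → Set.EqOn δ γ I → J = I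

/-- The open interval of reals with (possibly infinite) extended-real endpoints. -/
def EIoo (a b : EReal) : Set ℝ := {s : ℝ | a < (s : EReal) ∧ (s : EReal) < b}

/-- The inverse hyperbolic tangent. -/
noncomputable def arctanh (x : ℝ) : ℝ := Real.log ((1 + x) / (1 - x)) / 2

/-!
On the line `y = 0` the second component of `F_ε` is `1 / tanh x − 2ε·h(0)`, and `tanh` maps
`(0, ∞)` into `(0, 1)` injectively, with inverse `artanh`; off that line the first component
does not vanish.
-/

lemma arctanh_eq_artanh {c : ℝ} (hc : c ∈ Icc (-1) 1) : arctanh c = Real.artanh c := by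
  rw [Real.artanh_eq_half_log hc, arctanh, one_div_mul_eq_div]

lemma tanh_mem_Ioo_of_pos {x : ℝ} (hx : 0 < x) : Real.tanh x ∈ Ioo 0 1 :=
  ⟨by simpa [Real.tanh_eq_sinh_div_cosh] using div_pos (Real.sinh_pos_iff.mpr hx) (Real.cosh_pos x),
    Real.tanh_lt_one x⟩

lemma one_div_eq_iff_of_mem_Ioo {t c : ℝ} (ht : t ∈ Ioo 0 1) :
    1 / t = c ↔ 1 < c ∧ t = 1 / c := by
  constructor
  · rintro rfl
    exact ⟨one_lt_one_div ht.1 ht.2, (one_div_one_div t).symm⟩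
  · rintro ⟨-, rfl⟩
    exact one_div_one_div c

lemma F_eq_zero_iff (h : ℝ → ℝ) (ε : ℝ) {x y : ℝ} (hx : 0 < x) :
    F h ε (x, y) = (0, 0) ↔ y = 0 ∧ 1 < 2 * ε * h 0 ∧ Real.tanh x = 1 / (2 * ε * h 0) := by
  simp only [F, Prod.mk.injEq, and_congr_right_iff]
  rintro rfl
  rw [show (1 : ℝ) - 0 ^ 2 = 1 by norm_num, Real.sqrt_one, mul_one, sub_eq_zero]
  exact one_div_eq_iff_of_mem_Ioo (tanh_mem_Ioo_of_pos hx)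

theorem stmt0_general (h : ℝ → ℝ)
    (ε : ℝ) :
    (∀ x₀ y₀ : ℝ, (x₀, y₀) ∈ PhasePlane →
      (F h ε (x₀, y₀) = (0, 0) ↔
        y₀ = 0 ∧ 1 < 2 * ε * h 0 ∧ Real.tanh x₀ = 1 / (2 * ε * h 0))) ∧
    (1 < 2 * ε * h 0 →
      (arctanh (1 / (2 * ε * h 0)), (0 : ℝ)) ∈ PhasePlane ∧
      F h ε (arctanh (1 / (2 * ε * h 0)), 0) = (0, 0) ∧
      ∀ p ∈ PhasePlane, F h ε p = (0, 0) → p = (arctanh (1 / (2 * ε * h 0)), 0)) ∧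
    (2 * ε * h 0 ≤ 1 → ∀ p ∈ PhasePlane, F h ε p ≠ (0, 0)) := by
  have equilibrium_iff (p : ℝ × ℝ) (hp : p ∈ PhasePlane) := F_eq_zero_iff h ε (y := p.2) hp.1
  refine ⟨fun x₀ y₀ hp => equilibrium_iff _ hp, fun hc => ?_, fun hc p hp hF => ?_⟩
  · set c := 1 / (2 * ε * h 0)
    have hc_mem : c ∈ Ioo 0 1 := ⟨by positivity, (div_lt_one (by linarith)).2 hc⟩
    have hc_mem' : c ∈ Ioo (-1) 1 := ⟨by linarith [hc_mem.1], hc_mem.2⟩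
    have hx : arctanh c = Real.artanh c := arctanh_eq_artanh (Ioo_subset_Icc_self hc_mem')
    have hmem : (arctanh c, (0 : ℝ)) ∈ PhasePlane :=
      ⟨hx ▸ Real.artanh_pos hc_mem, by norm_num, by norm_num⟩
    refine ⟨hmem, (equilibrium_iff _ hmem).2 ⟨rfl, hc, ?_⟩, fun ⟨x, y⟩ hp hF => ?_⟩
    · rw [hx, Real.tanh_artanh hc_mem']
    · obtain ⟨rfl, -, htanh⟩ := (equilibrium_iff _ hp).1 hF
      rw [hx, ← htanh, Real.artanh_tanh]
  · exact absurd ((equilibrium_iff p hp).1 hF).2.1 (not_lt.2 hc)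

/-- a point of the phase plane is an equilibrium of `F_ε` iff `y₀ = 0`,
`2ε·h(0) > 1` and `tanh x₀ = 1/(2ε·h(0))`; in particular for `2ε·h(0) > 1` there is
exactly one equilibrium, namely `(arctanh (1/(2ε·h 0)), 0)`, and for `2ε·h(0) ≤ 1` none. -/
theorem stmt0 (h : ℝ → ℝ) (hC : ContDiffOn ℝ 1 h (Set.Icc (-1 : ℝ) 1))
    (ε : ℝ) (hε : ε = 1 ∨ ε = -1) :
    (∀ x₀ y₀ : ℝ, (x₀, y₀) ∈ PhasePlane →
      (F h ε (x₀, y₀) = (0, 0) ↔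
        y₀ = 0 ∧ 1 < 2 * ε * h 0 ∧ Real.tanh x₀ = 1 / (2 * ε * h 0))) ∧
    (1 < 2 * ε * h 0 →
      (arctanh (1 / (2 * ε * h 0)), (0 : ℝ)) ∈ PhasePlane ∧
      F h ε (arctanh (1 / (2 * ε * h 0)), 0) = (0, 0) ∧
      ∀ p ∈ PhasePlane, F h ε p = (0, 0) → p = (arctanh (1 / (2 * ε * h 0)), 0)) ∧
    (2 * ε * h 0 ≤ 1 → ∀ p ∈ PhasePlane, F h ε p ≠ (0, 0)) :=
  stmt0_general h ε
end

section
/- Let h : [-1,1] → ℝ be C¹ and ε ∈ {-1,1}. Suppose γ = (x,y) : (a,∞) → Θ is a solution of γ'(s) = F_ε(γ(s)) such that x(s) → ∞ and y(s) → y₀ for some y₀ ∈ (-1,1) as s → ∞. Then 2ε·h(y₀) = √(1-y₀²). The same conclusion holds for a solution on (-∞,b) with x(s) → ∞ and y(s) → y₀ ∈ (-1,1) as s → -∞. -/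
open Filter Set

/-!
Along the orbit, `y' = (1-y²)/tanh x − 2ε h(y) √(1-y²)`. As `x → ∞` we have `tanh x → 1`, so `y'`
converges to `(1-y₀²) − 2ε h(y₀) √(1-y₀²)`. A convergent function whose derivative has a limit
must have derivative tending to `0` (mean value theorem on `[s, s+1]`), and dividing
`(1-y₀²) = 2ε h(y₀) √(1-y₀²)` by `√(1-y₀²) > 0` gives the claim.
-/

open Topology

theorem Real.tanh_eq_one_sub_two_div (x : ℝ) : Real.tanh x = 1 - 2 / (Real.exp (2 * x) + 1) := by
  rw [Real.tanh_eq_sinh_div_cosh, Real.sinh_eq, Real.cosh_eq, Real.exp_neg,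
    show 2 * x = x + x by ring, Real.exp_add]
  have := Real.exp_pos x
  field_simp
  ring

theorem Real.tendsto_tanh_atTop : Tendsto Real.tanh atTop (𝓝 1) := by
  have hden : Tendsto (fun x : ℝ => Real.exp (2 * x) + 1) atTop atTop :=
    tendsto_atTop_add_const_right _ _
      (Real.tendsto_exp_atTop.comp (tendsto_id.const_mul_atTop two_pos))
  simpa [← Real.tanh_eq_one_sub_two_div] using (hden.const_div_atTop 2).const_sub 1

theorem eq_zero_of_tendsto_of_tendsto_deriv_atTop {f f' : ℝ → ℝ} {c L : ℝ}
    (hf : ∀ᶠ s in atTop, HasDerivAt f (f' s) s)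
    (hfc : Tendsto f atTop (𝓝 c)) (hf' : Tendsto f' atTop (𝓝 L)) : L = 0 := by
  obtain ⟨N, hN⟩ := eventually_atTop.mp hf
  have mvt : ∀ s ≥ N, ∃ ξ ∈ Ioo s (s + 1), f' ξ = f (s + 1) - f s := by
    intro s hs
    obtain ⟨ξ, hξ, hslope⟩ := exists_hasDerivAt_eq_slope f f' (lt_add_one s)
      (fun t ht => (hN t (hs.trans ht.1)).continuousAt.continuousWithinAt)
      (fun t ht => hN t (hs.trans ht.1.le))
    exact ⟨ξ, hξ, by simpa using hslope⟩
  choose! ξ hξ hslope using mvt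
  have hξ_atTop : Tendsto ξ atTop atTop :=
    tendsto_atTop_mono' _ (eventually_ge_atTop N |>.mono fun s hs => (hξ s hs).1.le) tendsto_id
  have hincr : Tendsto (fun s => f (s + 1) - f s) atTop (𝓝 L) :=
    (hf'.comp hξ_atTop).congr' (eventually_ge_atTop N |>.mono fun s hs => hslope s hs)
  have hincr' : Tendsto (fun s => f (s + 1) - f s) atTop (𝓝 (c - c)) :=
    (hfc.comp (tendsto_atTop_add_const_right _ 1 tendsto_id)).sub hfc
  simpa using tendsto_nhds_unique hincr hincr'

theorem eq_zero_of_tendsto_of_tendsto_deriv_atBot {f f' : ℝ → ℝ} {c L : ℝ}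
    (hf : ∀ᶠ s in atBot, HasDerivAt f (f' s) s)
    (hfc : Tendsto f atBot (𝓝 c)) (hf' : Tendsto f' atBot (𝓝 L)) : L = 0 := by
  have hneg : ∀ᶠ s in atTop, HasDerivAt (fun t => f (-t)) (-f' (-s)) s :=
    (tendsto_neg_atTop_atBot.eventually hf).mono fun s hs => by
      simpa [Function.comp_def] using hs.comp s (hasDerivAt_neg s)
  simpa using eq_zero_of_tendsto_of_tendsto_deriv_atTop hneg
    (hfc.comp tendsto_neg_atTop_atBot) (hf'.comp tendsto_neg_atTop_atBot).neg

theorem eq_sqrt_of_sub_mul_sqrt_eq_zero {u c : ℝ} (hu : 0 < u) (h : u - c * √u = 0) :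
    c = √u := by
  have hsqrt : 0 < √u := Real.sqrt_pos.mpr hu
  have : (c - √u) * √u = 0 := by rw [sub_mul, Real.mul_self_sqrt hu.le]; linarith
  linarith [(mul_eq_zero.mp this).resolve_right hsqrt.ne']

theorem tendsto_F_snd {h : ℝ → ℝ} {ε y₀ : ℝ} (hh : ContinuousAt h y₀) :
    Tendsto (fun p => (F h ε p).2) (atTop ×ˢ 𝓝 y₀)
      (𝓝 (1 - y₀ ^ 2 - 2 * ε * h y₀ * √(1 - y₀ ^ 2))) := by
  have hy : Tendsto (fun p : ℝ × ℝ => p.2) (atTop ×ˢ 𝓝 y₀) (𝓝 y₀) := tendsto_snd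
  have htanh : Tendsto (fun p : ℝ × ℝ => Real.tanh p.1) (atTop ×ˢ 𝓝 y₀) (𝓝 1) :=
    Real.tendsto_tanh_atTop.comp tendsto_fst
  have hquad : Tendsto (fun p : ℝ × ℝ => 1 - p.2 ^ 2) (atTop ×ˢ 𝓝 y₀) (𝓝 (1 - y₀ ^ 2)) :=
    tendsto_const_nhds.sub (hy.pow 2)
  simpa [F] using (hquad.div htanh one_ne_zero).sub
    ((tendsto_const_nhds.mul (hh.tendsto.comp hy)).mul hquad.sqrt)

theorem IsOrbitOn.hasDerivAt_snd {h : ℝ → ℝ} {ε : ℝ} {γ : ℝ → ℝ × ℝ} {I : Set ℝ}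
    (hγ : IsOrbitOn h ε γ I) {s : ℝ} (hs : s ∈ I) :
    HasDerivAt (fun t => (γ t).2) (F h ε (γ s)).2 s :=
  (hγ.2.2 s hs).2.snd

theorem stmt2_general (h : ℝ → ℝ) (hC : ContDiffOn ℝ 1 h (Set.Icc (-1 : ℝ) 1))
    (ε : ℝ) (y₀ : ℝ) (hy₀ : y₀ ∈ Set.Ioo (-1 : ℝ) 1) :
    (∀ (a : ℝ) (γ : ℝ → ℝ × ℝ), IsOrbitOn h ε γ (Set.Ioi a) →
      Filter.Tendsto (fun s => (γ s).1) Filter.atTop Filter.atTop →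
      Filter.Tendsto (fun s => (γ s).2) Filter.atTop (nhds y₀) →
      2 * ε * h y₀ = Real.sqrt (1 - y₀ ^ 2)) ∧
    (∀ (b : ℝ) (γ : ℝ → ℝ × ℝ), IsOrbitOn h ε γ (Set.Iio b) →
      Filter.Tendsto (fun s => (γ s).1) Filter.atBot Filter.atTop →
      Filter.Tendsto (fun s => (γ s).2) Filter.atBot (nhds y₀) →
      2 * ε * h y₀ = Real.sqrt (1 - y₀ ^ 2)) := by
  have hcont : ContinuousAt h y₀ := hC.continuousOn.continuousAt (Icc_mem_nhds hy₀.1 hy₀.2)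
  have hpos : 0 < 1 - y₀ ^ 2 := by nlinarith [hy₀.1, hy₀.2]
  refine ⟨fun a γ hγ hx hy => ?_, fun b γ hγ hx hy => ?_⟩
  · refine eq_sqrt_of_sub_mul_sqrt_eq_zero hpos ?_
    simpa only [mul_assoc] using eq_zero_of_tendsto_of_tendsto_deriv_atTop
      ((eventually_gt_atTop a).mono fun s hs => hγ.hasDerivAt_snd hs) hy
      ((tendsto_F_snd hcont).comp (hx.prodMk hy))
  · refine eq_sqrt_of_sub_mul_sqrt_eq_zero hpos ?_
    simpa only [mul_assoc] using eq_zero_of_tendsto_of_tendsto_deriv_atBot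
      ((eventually_lt_atBot b).mono fun s hs => hγ.hasDerivAt_snd hs) hy
      ((tendsto_F_snd hcont).comp (hx.prodMk hy))

/-- if an orbit satisfies `x(s) → ∞` and `y(s) → y₀ ∈ (-1,1)` as `s → ∞`
(or `s → -∞`), then `2ε·h(y₀) = √(1-y₀²)`. -/
theorem stmt2 (h : ℝ → ℝ) (hC : ContDiffOn ℝ 1 h (Set.Icc (-1 : ℝ) 1))
    (ε : ℝ) (hε : ε = 1 ∨ ε = -1) (y₀ : ℝ) (hy₀ : y₀ ∈ Set.Ioo (-1 : ℝ) 1) :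
    (∀ (a : ℝ) (γ : ℝ → ℝ × ℝ), IsOrbitOn h ε γ (Set.Ioi a) →
      Filter.Tendsto (fun s => (γ s).1) Filter.atTop Filter.atTop →
      Filter.Tendsto (fun s => (γ s).2) Filter.atTop (nhds y₀) →
      2 * ε * h y₀ = Real.sqrt (1 - y₀ ^ 2)) ∧
    (∀ (b : ℝ) (γ : ℝ → ℝ × ℝ), IsOrbitOn h ε γ (Set.Iio b) →
      Filter.Tendsto (fun s => (γ s).1) Filter.atBot Filter.atTop →
      Filter.Tendsto (fun s => (γ s).2) Filter.atBot (nhds y₀) →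
      2 * ε * h y₀ = Real.sqrt (1 - y₀ ^ 2)) :=
  stmt2_general h hC ε y₀ hy₀
end

section
/- Let h : [-1,1] → ℝ be C¹ and ε ∈ {-1,1}. There is no orbit γ = (x,y) : (a,b) → Θ of the system γ' = F_ε∘γ (with -∞ ≤ a < b ≤ ∞) such that γ(s) converges, as s → b⁻ or as s → a⁺, to a point (0, y₀) with |y₀| < 1. -/
open Filter Set

/-!
Near a point `(0, y₀)` with `|y₀| < 1` the term `(1 - y²) / tanh x` blows up while the forcing
term `2ε h(y) √(1 - y²)` stays bounded, so `y` increases strictly along an orbit approaching the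
point; at the right end of the time interval this gives `y < y₀`. If `y₀ > 0`, then eventually
`x' = y > 0`, so `x` increases and cannot tend to `0` from above. If `y₀ ≤ 0`, then `y < 0`, and
`y² / 2 - c log (sinh x) + K x`, with `0 < c < 1 - y₀²` and `K` bounding the forcing term, is
nonincreasing along the orbit although it tends to `+∞` as `x → 0⁺`. The time reversal
`(x, y)(s) ↦ (x, -y)(-s)`, which turns orbits for `h` into orbits for `u ↦ h (-u)`, exchanges the
two ends of the interval.
-/

open Topology

namespace Real

lemma tanh_pos {x : ℝ} (hx : 0 < x) : 0 < tanh x := by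
  rw [tanh_eq_sinh_div_cosh]
  exact div_pos (sinh_pos_iff.mpr hx) (cosh_pos x)

lemma continuous_tanh : Continuous tanh := by
  simp only [funext tanh_eq_sinh_div_cosh]
  exact continuous_sinh.div continuous_cosh fun x => (cosh_pos x).ne'

end Real

theorem HasDerivAt.fst {𝕜 E G : Type*} [NontriviallyNormedField 𝕜] [NormedAddCommGroup E]
    [NormedSpace 𝕜 E] [NormedAddCommGroup G] [NormedSpace 𝕜 G] {f : 𝕜 → E × G} {f' : E × G}
    {x : 𝕜} (hf : HasDerivAt f f' x) : HasDerivAt (fun s => (f s).1) f'.1 x :=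
  (hasFDerivAt_fst (p := f x)).comp_hasDerivAt x hf

theorem HasDerivAt.snd {𝕜 E G : Type*} [NontriviallyNormedField 𝕜] [NormedAddCommGroup E]
    [NormedSpace 𝕜 E] [NormedAddCommGroup G] [NormedSpace 𝕜 G] {f : 𝕜 → E × G} {f' : E × G}
    {x : 𝕜} (hf : HasDerivAt f f' x) : HasDerivAt (fun s => (f s).2) f'.2 x :=
  (hasFDerivAt_snd (p := f x)).comp_hasDerivAt x hf

theorem strictMonoOn_of_hasDerivAt_pos {J : Set ℝ} (hJc : Convex ℝ J) (hJo : IsOpen J)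
    {f f' : ℝ → ℝ} (hf : ∀ s ∈ J, HasDerivAt f (f' s) s) (hf' : ∀ s ∈ J, 0 < f' s) :
    StrictMonoOn f J :=
  strictMonoOn_of_hasDerivWithinAt_pos hJc (fun s hs => (hf s hs).continuousAt.continuousWithinAt)
    (fun s hs => by rw [hJo.interior_eq] at hs ⊢; exact (hf s hs).hasDerivWithinAt)
    (fun s hs => hf' s (interior_subset hs))

theorem antitoneOn_of_hasDerivAt_nonpos {J : Set ℝ} (hJc : Convex ℝ J) (hJo : IsOpen J)
    {f f' : ℝ → ℝ} (hf : ∀ s ∈ J, HasDerivAt f (f' s) s) (hf' : ∀ s ∈ J, f' s ≤ 0) :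
    AntitoneOn f J :=
  antitoneOn_of_hasDerivWithinAt_nonpos hJc (fun s hs => (hf s hs).continuousAt.continuousWithinAt)
    (fun s hs => by rw [hJo.interior_eq] at hs ⊢; exact (hf s hs).hasDerivWithinAt)
    (fun s hs => hf' s (interior_subset hs))

def AtRightEnd (l : Filter ℝ) (J : Set ℝ) : Prop :=
  (∀ᶠ t in l, t ∈ J) ∧ ∀ s ∈ J, ∀ᶠ t in l, s < t

namespace AtRightEnd

variable {l : Filter ℝ} {J : Set ℝ}

theorem inter_Ioi (hl : AtRightEnd l J) {s₀ : ℝ} (hs₀ : s₀ ∈ J) : AtRightEnd l (J ∩ Ioi s₀) :=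
  ⟨hl.1.and (hl.2 s₀ hs₀), fun s hs => hl.2 s hs.1⟩

theorem lt_of_strictMonoOn [l.NeBot] (hl : AtRightEnd l J) {f : ℝ → ℝ} {L : ℝ}
    (hf : StrictMonoOn f J) (hfL : Tendsto f l (𝓝 L)) {s : ℝ} (hs : s ∈ J) : f s < L := by
  obtain ⟨s', hs', hss'⟩ := (hl.1.and (hl.2 s hs)).exists
  have hle : ∀ᶠ t in l, f s' ≤ f t :=
    (hl.1.and (hl.2 s' hs')).mono fun t ht => (hf hs' ht.1 ht.2).le
  exact (hf hs hs' hss').trans_le (ge_of_tendsto hfL hle)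

theorem not_tendsto_atTop_of_antitoneOn [l.NeBot] (hl : AtRightEnd l J) {f : ℝ → ℝ}
    (hf : AntitoneOn f J) : ¬ Tendsto f l atTop := by
  intro hf_top
  obtain ⟨s, hs⟩ := hl.1.exists
  obtain ⟨t, ht, hlt⟩ := ((hl.1.and (hl.2 s hs)).and (hf_top.eventually_gt_atTop (f s))).exists
  exact (hf hs ht.1 ht.2.le).not_gt hlt

end AtRightEnd

/-- On `J`, `(x, y)` solves `x' = y`, `y' = (1 - y²) / tanh x - g`, in a region where the singular
term dominates the bounded forcing term `g`. -/
structure CothSolution (J : Set ℝ) (x y g : ℝ → ℝ) (c K : ℝ) : Prop where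
  pos : ∀ s ∈ J, 0 < x s
  hasDerivAt_x : ∀ s ∈ J, HasDerivAt x (y s) s
  hasDerivAt_y : ∀ s ∈ J, HasDerivAt y ((1 - y s ^ 2) / Real.tanh (x s) - g s) s
  abs_le : ∀ s ∈ J, |g s| ≤ K
  le_one_sub_sq : ∀ s ∈ J, c ≤ 1 - y s ^ 2
  mul_tanh_lt : ∀ s ∈ J, K * Real.tanh (x s) < c

noncomputable def energy (c K x y : ℝ) : ℝ := y ^ 2 / 2 - c * Real.log (Real.sinh x) + K * x

theorem tendsto_energy_atTop {l : Filter ℝ} {x y : ℝ → ℝ} {c K y₀ : ℝ} (hc : 0 < c)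
    (hx : ∀ᶠ s in l, 0 < x s) (hx0 : Tendsto x l (𝓝 0)) (hy0 : Tendsto y l (𝓝 y₀)) :
    Tendsto (fun s => energy c K (x s) (y s)) l atTop := by
  have hsinh : Tendsto (fun s => Real.sinh (x s)) l (𝓝[>] 0) :=
    tendsto_nhdsWithin_of_tendsto_nhds_of_eventually_within _
      ((Real.continuous_sinh.tendsto' 0 0 Real.sinh_zero).comp hx0)
      (hx.mono fun s hs => Real.sinh_pos_iff.mpr hs)
  have hlog : Tendsto (fun s => -c * Real.log (Real.sinh (x s))) l atTop :=
    (Real.tendsto_log_nhdsGT_zero.comp hsinh).const_mul_atBot_of_neg (neg_lt_zero.mpr hc)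
  have hrest : Tendsto (fun s => y s ^ 2 / 2 + K * x s) l (𝓝 (y₀ ^ 2 / 2 + K * 0)) :=
    ((hy0.pow 2).div_const 2).add (hx0.const_mul K)
  exact (hrest.add_atTop hlog).congr fun s => by simp only [energy]; ring

namespace CothSolution

variable {J : Set ℝ} {x y g : ℝ → ℝ} {c K : ℝ}

theorem c_pos (hsol : CothSolution J x y g c K) {s : ℝ} (hs : s ∈ J) : 0 < c :=
  calc 0 ≤ K * Real.tanh (x s) :=
        mul_nonneg ((abs_nonneg _).trans (hsol.abs_le s hs)) (Real.tanh_pos (hsol.pos s hs)).le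
    _ < c := hsol.mul_tanh_lt s hs

theorem strictMonoOn_y (hsol : CothSolution J x y g c K) (hJc : Convex ℝ J) (hJo : IsOpen J) :
    StrictMonoOn y J :=
  strictMonoOn_of_hasDerivAt_pos hJc hJo hsol.hasDerivAt_y fun s hs => by
    have hK : K < (1 - y s ^ 2) / Real.tanh (x s) := by
      rw [lt_div_iff₀ (Real.tanh_pos (hsol.pos s hs))]
      exact (hsol.mul_tanh_lt s hs).trans_le (hsol.le_one_sub_sq s hs)
    linarith [le_abs_self (g s), hsol.abs_le s hs]

theorem hasDerivAt_energy (hsol : CothSolution J x y g c K) {s : ℝ} (hs : s ∈ J) :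
    HasDerivAt (fun t => energy c K (x t) (y t))
      (y s * ((1 - y s ^ 2 - c) / Real.tanh (x s) + (K - g s))) s := by
  have hx := hsol.hasDerivAt_x s hs
  have hsinh := Real.sinh_pos_iff.mpr (hsol.pos s hs)
  have hd := (((hsol.hasDerivAt_y s hs).pow 2).div_const 2).sub
    ((hx.sinh.log hsinh.ne').const_mul c) |>.add (hx.const_mul K)
  refine hd.congr_deriv ?_
  rw [Real.tanh_eq_sinh_div_cosh]
  field_simp
  ring

theorem antitoneOn_energy (hsol : CothSolution J x y g c K) (hJc : Convex ℝ J) (hJo : IsOpen J)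
    (hy : ∀ s ∈ J, y s ≤ 0) : AntitoneOn (fun t => energy c K (x t) (y t)) J :=
  antitoneOn_of_hasDerivAt_nonpos hJc hJo (fun _ hs => hsol.hasDerivAt_energy hs) fun s hs =>
    mul_nonpos_of_nonpos_of_nonneg (hy s hs) <| add_nonneg
      (div_nonneg (sub_nonneg.mpr (hsol.le_one_sub_sq s hs)) (Real.tanh_pos (hsol.pos s hs)).le)
      (sub_nonneg.mpr ((le_abs_self _).trans (hsol.abs_le s hs)))

theorem false_of_tendsto (hsol : CothSolution J x y g c K) (hJc : Convex ℝ J) (hJo : IsOpen J)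
    {l : Filter ℝ} [l.NeBot] (hl : AtRightEnd l J) {y₀ : ℝ}
    (hx0 : Tendsto x l (𝓝 0)) (hy0 : Tendsto y l (𝓝 y₀)) : False := by
  have hy_mono := hsol.strictMonoOn_y hJc hJo
  rcases le_or_gt y₀ 0 with hy₀ | hy₀
  · have hy_nonpos (s : ℝ) (hs : s ∈ J) : y s ≤ 0 :=
      (hl.lt_of_strictMonoOn hy_mono hy0 hs).le.trans hy₀
    obtain ⟨s, hs⟩ := hl.1.exists
    exact hl.not_tendsto_atTop_of_antitoneOn (hsol.antitoneOn_energy hJc hJo hy_nonpos)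
      (tendsto_energy_atTop (hsol.c_pos hs) (hl.1.mono hsol.pos) hx0 hy0)
  · obtain ⟨s₀, hs₀, hys₀⟩ := (hl.1.and (hy0.eventually_const_lt hy₀)).exists
    have hl' := hl.inter_Ioi hs₀
    have hx_mono : StrictMonoOn x (J ∩ Ioi s₀) :=
      strictMonoOn_of_hasDerivAt_pos (hJc.inter (convex_Ioi _)) (hJo.inter isOpen_Ioi)
        (fun s hs => hsol.hasDerivAt_x s hs.1) fun s hs => hys₀.trans (hy_mono hs₀ hs.1 hs.2)
    obtain ⟨s, hs⟩ := hl'.1.exists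
    exact (hsol.pos s hs.1).not_gt (hl'.lt_of_strictMonoOn hx_mono hx0 hs)

end CothSolution

theorem isOpen_EIoo (a b : EReal) : IsOpen (EIoo a b) :=
  isOpen_Ioo.preimage continuous_coe_real_ereal

theorem convex_EIoo (a b : EReal) : Convex ℝ (EIoo a b) :=
  (ordConnected_Ioo.preimage_mono EReal.coe_strictMono.monotone).convex

theorem neg_EIoo (a b : EReal) : -EIoo a b = EIoo (-b) (-a) := by
  ext s
  simp [EIoo, EReal.lt_neg_comm, EReal.neg_lt_comm, and_comm]

theorem comap_coe_nhdsLT_neBot {a b : EReal} (hab : a < b) :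
    (comap ((↑) : ℝ → EReal) (𝓝[<] b)).NeBot :=
  comap_neBot_iff.mpr fun _ ht => by
    obtain ⟨c, hc, hsub⟩ := (nhdsLT_basis_of_exists_lt ⟨a, hab⟩).mem_iff.mp ht
    obtain ⟨z, hz⟩ := EReal.exists_between_coe_real hc
    exact ⟨z, hsub hz⟩

theorem atRightEnd_comap_coe_nhdsLT {c b : EReal} (hcb : c < b) :
    AtRightEnd (comap ((↑) : ℝ → EReal) (𝓝[<] b)) (EIoo c b) :=
  ⟨preimage_mem_comap (Ioo_mem_nhdsLT hcb), fun _ hs =>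
    mem_of_superset (preimage_mem_comap (Ioo_mem_nhdsLT hs.2)) fun _ ht =>
      EReal.coe_lt_coe_iff.mp ht.1⟩

theorem tendsto_neg_comap_coe_nhdsLT (a : EReal) :
    Tendsto (Neg.neg : ℝ → ℝ) (comap (↑) (𝓝[<] (-a))) (comap (↑) (𝓝[>] a)) := by
  have hneg : Tendsto (Neg.neg : EReal → EReal) (𝓝[<] (-a)) (𝓝[>] a) :=
    tendsto_nhdsWithin_of_tendsto_nhds_of_eventually_within _
      ((continuous_neg.tendsto' (-a) a (neg_neg a)).mono_left nhdsWithin_le_nhds)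
      (eventually_nhdsWithin_of_forall fun _ hx => EReal.lt_neg_comm.mp hx)
  refine tendsto_comap_iff.mpr ?_
  rw [show ((↑) : ℝ → EReal) ∘ Neg.neg = Neg.neg ∘ (↑) from funext EReal.coe_neg]
  exact hneg.comp tendsto_comap

namespace IsOrbitOn

variable {h : ℝ → ℝ} {ε : ℝ} {γ : ℝ → ℝ × ℝ} {I : Set ℝ} {a b : EReal}

theorem cothSolution (hγ : IsOrbitOn h ε γ I) {J : Set ℝ} (hJI : J ⊆ I) {c C : ℝ}
    (hC : ∀ u ∈ Icc (-1) 1, ‖h u‖ ≤ C) (hc : ∀ s ∈ J, c ≤ 1 - (γ s).2 ^ 2)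
    (hsmall : ∀ s ∈ J, 2 * |ε| * C * Real.tanh (γ s).1 < c) :
    CothSolution J (fun s => (γ s).1) (fun s => (γ s).2)
      (fun s => 2 * ε * h (γ s).2 * √(1 - (γ s).2 ^ 2)) c (2 * |ε| * C) where
  pos s hs := (hγ.2.2 s (hJI hs)).1.1
  hasDerivAt_x s hs := (hγ.2.2 s (hJI hs)).2.fst
  hasDerivAt_y s hs := (hγ.2.2 s (hJI hs)).2.snd
  abs_le s hs := by
    have hy := (hγ.2.2 s (hJI hs)).1.2
    have hh : |h (γ s).2| ≤ C := hC _ ⟨hy.1.le, hy.2.le⟩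
    calc |2 * ε * h (γ s).2 * √(1 - (γ s).2 ^ 2)|
        = 2 * |ε| * |h (γ s).2| * √(1 - (γ s).2 ^ 2) := by
          rw [abs_mul, abs_mul, abs_mul, abs_two, abs_of_nonneg (Real.sqrt_nonneg _)]
      _ ≤ 2 * |ε| * C * 1 := by
          have hC0 : 0 ≤ C := (abs_nonneg _).trans hh
          gcongr
          exact Real.sqrt_le_one.mpr (sub_le_self _ (sq_nonneg _))
      _ = 2 * |ε| * C := mul_one _
  le_one_sub_sq := hc
  mul_tanh_lt := hsmall

theorem not_tendsto_nhdsLT (hγ : IsOrbitOn h ε γ (EIoo a b)) (hh : ContinuousOn h (Icc (-1) 1))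
    (hab : a < b) {y₀ : ℝ} (hy₀ : |y₀| < 1) :
    ¬ Tendsto γ (comap (↑) (𝓝[<] b)) (𝓝 (0, y₀)) := by
  intro hlim
  have := comap_coe_nhdsLT_neBot hab
  obtain ⟨C, hC⟩ := isCompact_Icc.exists_bound_of_continuousOn hh
  have hx0 : Tendsto (fun s => (γ s).1) _ (𝓝 0) := (continuous_fst.tendsto _).comp hlim
  have hy0 : Tendsto (fun s => (γ s).2) _ (𝓝 y₀) := (continuous_snd.tendsto _).comp hlim
  have hy₀_sq : y₀ ^ 2 < 1 := (sq_lt_one_iff_abs_lt_one y₀).mpr hy₀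
  obtain ⟨c, hc, hcy₀⟩ : ∃ c, 0 < c ∧ c < 1 - y₀ ^ 2 := ⟨(1 - y₀ ^ 2) / 2, by linarith, by linarith⟩
  have hnear : ∀ᶠ s in comap (↑) (𝓝[<] b), s ∈ EIoo a b ∧ c < 1 - (γ s).2 ^ 2 ∧
      2 * |ε| * C * Real.tanh (γ s).1 < c :=
    (atRightEnd_comap_coe_nhdsLT hab).1.and <|
      (((hy0.pow 2).const_sub 1).eventually_const_lt hcy₀).and <|
      (((Real.continuous_tanh.tendsto' 0 0 Real.tanh_zero).comp hx0).const_mul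
        (2 * |ε| * C)).eventually_lt_const (by simpa using hc)
  obtain ⟨c₀, hc₀, hJ⟩ := ((nhdsLT_basis_of_exists_lt ⟨a, hab⟩).comap _).eventually_iff.mp hnear
  exact (hγ.cothSolution (fun s hs => (hJ hs).1) hC (fun s hs => (hJ hs).2.1.le)
    fun s hs => (hJ hs).2.2).false_of_tendsto (convex_EIoo c₀ b) (isOpen_EIoo c₀ b)
    (atRightEnd_comap_coe_nhdsLT hc₀) hx0 hy0

theorem reflect (hγ : IsOrbitOn h ε γ I) :
    IsOrbitOn (fun u => h (-u)) ε (fun s => ((γ (-s)).1, -(γ (-s)).2)) (-I) := by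
  refine ⟨hγ.1.neg, ?_, fun s hs => ?_⟩
  · rw [← neg_preimage]
    exact hγ.2.1.preimage_anti fun _ _ => neg_le_neg
  obtain ⟨⟨hx, hy⟩, hd⟩ := hγ.2.2 (-s) hs
  refine ⟨⟨hx, by linarith [hy.2], by linarith [hy.1]⟩, ?_⟩
  have hd' := hd.scomp s (hasDerivAt_neg s)
  convert hd'.fst.prodMk hd'.snd.neg using 1 <;> simp [F]

theorem not_tendsto_nhdsGT (hγ : IsOrbitOn h ε γ (EIoo a b)) (hh : ContinuousOn h (Icc (-1) 1))
    (hab : a < b) {y₀ : ℝ} (hy₀ : |y₀| < 1) :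
    ¬ Tendsto γ (comap (↑) (𝓝[>] a)) (𝓝 (0, y₀)) := by
  intro hlim
  have hγ' := hγ.reflect
  rw [neg_EIoo] at hγ'
  have hh' : ContinuousOn (fun u => h (-u)) (Icc (-1) 1) :=
    hh.comp continuousOn_neg fun u hu => ⟨by linarith [hu.2], by linarith [hu.1]⟩
  refine hγ'.not_tendsto_nhdsLT hh' (EReal.neg_lt_neg_iff.mpr hab) (by rwa [abs_neg]) ?_
  have hflip : Continuous fun p : ℝ × ℝ => (p.1, -p.2) := by fun_prop
  exact (hflip.tendsto (0, y₀)).comp (hlim.comp (tendsto_neg_comap_coe_nhdsLT a))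

end IsOrbitOn

theorem stmt3_general (h : ℝ → ℝ) (hC : ContDiffOn ℝ 1 h (Set.Icc (-1 : ℝ) 1))
    (ε : ℝ) :
    ∀ (a b : EReal), a < b → ∀ γ : ℝ → ℝ × ℝ, IsOrbitOn h ε γ (EIoo a b) →
      ∀ y₀ : ℝ, |y₀| < 1 →
        ¬ Filter.Tendsto γ
            (Filter.comap (fun s : ℝ => (s : EReal)) (nhdsWithin b (Set.Iio b)))
            (nhds ((0 : ℝ), y₀)) ∧
        ¬ Filter.Tendsto γ
            (Filter.comap (fun s : ℝ => (s : EReal)) (nhdsWithin a (Set.Ioi a)))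
            (nhds ((0 : ℝ), y₀)) := by
  intro a b hab γ hγ y₀ hy₀
  exact ⟨hγ.not_tendsto_nhdsLT hC.continuousOn hab hy₀,
    hγ.not_tendsto_nhdsGT hC.continuousOn hab hy₀⟩

/-- no orbit on an interval `(a,b)` (with `-∞ ≤ a < b ≤ ∞`) converges, as
`s → b⁻` or as `s → a⁺`, to a point `(0, y₀)` with `|y₀| < 1`. -/
theorem stmt3 (h : ℝ → ℝ) (hC : ContDiffOn ℝ 1 h (Set.Icc (-1 : ℝ) 1))
    (ε : ℝ) (hε : ε = 1 ∨ ε = -1) :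
    ∀ (a b : EReal), a < b → ∀ γ : ℝ → ℝ × ℝ, IsOrbitOn h ε γ (EIoo a b) →
      ∀ y₀ : ℝ, |y₀| < 1 →
        ¬ Filter.Tendsto γ
            (Filter.comap (fun s : ℝ => (s : EReal)) (nhdsWithin b (Set.Iio b)))
            (nhds ((0 : ℝ), y₀)) ∧
        ¬ Filter.Tendsto γ
            (Filter.comap (fun s : ℝ => (s : EReal)) (nhdsWithin a (Set.Ioi a)))
            (nhds ((0 : ℝ), y₀)) :=
  stmt3_general h hC ε
end

section
/- Let h : [-1,1] → ℝ be C¹ and ε ∈ {-1,1}. Define on Θ = (0,∞) × (-1,1) the function α(x,y) = sinh(x)/√(1-y²) and the vector field V = α·F_ε, i.e. V(x,y) = (α(x,y)·y, α(x,y)·((1-y²)/tanh(x) − 2ε·h(y)·√(1-y²))). Then the divergence of V satisfies ∂ₓ(V₁)(x,y) + ∂_y(V₂)(x,y) = −2ε·h'(y)·sinh(x) for every (x,y) ∈ Θ. -/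
open Filter Set

/-! On `Θ` the second component of `V` simplifies to `cosh x · √(1-y²) − 2ε·sinh x·h(y)`,
whose `y`-derivative `−cosh x · y/√(1-y²) − 2ε·sinh x·h'(y)` cancels
`∂ₓV₁ = cosh x · y/√(1-y²)` up to the claimed term. -/

theorem hasDerivAt_sqrt_one_sub_sq {y : ℝ} (hy : 1 - y ^ 2 ≠ 0) :
    HasDerivAt (fun u : ℝ => Real.sqrt (1 - u ^ 2)) (-y / Real.sqrt (1 - y ^ 2)) y := by
  have hpoly : HasDerivAt (fun u : ℝ => 1 - u ^ 2) (-(2 * y)) y := by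
    simpa using (hasDerivAt_pow 2 y).const_sub 1
  refine ((Real.hasDerivAt_sqrt hy).comp y hpoly).congr_deriv ?_
  field_simp

theorem sinh_div_sqrt_mul_F_snd (h : ℝ → ℝ) (ε : ℝ) {x u : ℝ} (hx : x ≠ 0)
    (hu : u ∈ Ioo (-1 : ℝ) 1) :
    Real.sinh x / Real.sqrt (1 - u ^ 2) * (F h ε (x, u)).2
      = Real.cosh x * Real.sqrt (1 - u ^ 2) - 2 * ε * Real.sinh x * h u := by
  have hu2 : 0 < 1 - u ^ 2 := by nlinarith [hu.1, hu.2]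
  have hs : 0 < Real.sqrt (1 - u ^ 2) := Real.sqrt_pos.mpr hu2
  have hsinh : Real.sinh x ≠ 0 := Real.sinh_ne_zero.mpr hx
  have hcosh : Real.cosh x ≠ 0 := (Real.cosh_pos x).ne'
  dsimp only [F]
  rw [← Real.sq_sqrt hu2.le, Real.tanh_eq_sinh_div_cosh, Real.sqrt_sq hs.le]
  field_simp

theorem hasDerivAt_sinh_div_sqrt_mul_F_snd (h : ℝ → ℝ) (ε : ℝ) {x y : ℝ} (hx : x ≠ 0)
    (hy : y ∈ Ioo (-1 : ℝ) 1) (hh : DifferentiableAt ℝ h y) :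
    HasDerivAt (fun u => Real.sinh x / Real.sqrt (1 - u ^ 2) * (F h ε (x, u)).2)
      (Real.cosh x * (-y / Real.sqrt (1 - y ^ 2)) - 2 * ε * Real.sinh x * deriv h y) y := by
  have hy2 : 1 - y ^ 2 ≠ 0 := by nlinarith [hy.1, hy.2]
  have hsimp : (fun u => Real.cosh x * Real.sqrt (1 - u ^ 2) - 2 * ε * Real.sinh x * h u)
      =ᶠ[nhds y] fun u => Real.sinh x / Real.sqrt (1 - u ^ 2) * (F h ε (x, u)).2 := by
    filter_upwards [Ioo_mem_nhds hy.1 hy.2] with u hu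
    exact (sinh_div_sqrt_mul_F_snd h ε hx hu).symm
  exact (((hasDerivAt_sqrt_one_sub_sq hy2).const_mul _).sub
    (hh.hasDerivAt.const_mul _)).congr_of_eventuallyEq hsimp.symm

theorem stmt8_general (h : ℝ → ℝ) (hC : ContDiffOn ℝ 1 h (Set.Icc (-1 : ℝ) 1))
    (ε : ℝ) :
    ∀ x y : ℝ, (x, y) ∈ PhasePlane →
      deriv (fun t => (Real.sinh t / Real.sqrt (1 - y ^ 2)) * y) x +
      deriv (fun u => (Real.sinh x / Real.sqrt (1 - u ^ 2)) *
          ((1 - u ^ 2) / Real.tanh x - 2 * ε * h u * Real.sqrt (1 - u ^ 2))) y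
      = -2 * ε * deriv h y * Real.sinh x := by
  rintro x y ⟨hx, hy⟩
  have hh : DifferentiableAt ℝ h y :=
    (hC.differentiableOn one_ne_zero).differentiableAt (Icc_mem_nhds hy.1 hy.2)
  have hV₁ : deriv (fun t => Real.sinh t / Real.sqrt (1 - y ^ 2) * y) x
      = Real.cosh x / Real.sqrt (1 - y ^ 2) * y :=
    (((Real.hasDerivAt_sinh x).div_const _).mul_const y).deriv
  have hV₂ := (hasDerivAt_sinh_div_sqrt_mul_F_snd h ε (ne_of_gt hx) hy hh).deriv
  dsimp only [F] at hV₂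
  rw [hV₁, hV₂]
  ring

/-- the divergence of the Dulac-rescaled field `V = α·F_ε`, with
`α(x,y) = sinh x / √(1-y²)`, equals `−2ε·h'(y)·sinh x` on the phase plane. -/
theorem stmt8 (h : ℝ → ℝ) (hC : ContDiffOn ℝ 1 h (Set.Icc (-1 : ℝ) 1))
    (ε : ℝ) (hε : ε = 1 ∨ ε = -1) :
    ∀ x y : ℝ, (x, y) ∈ PhasePlane →
      deriv (fun t => (Real.sinh t / Real.sqrt (1 - y ^ 2)) * y) x +
      deriv (fun u => (Real.sinh x / Real.sqrt (1 - u ^ 2)) *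
          ((1 - u ^ 2) / Real.tanh x - 2 * ε * h u * Real.sqrt (1 - u ^ 2))) y
      = -2 * ε * deriv h y * Real.sinh x :=
  stmt8_general h hC ε
end

section
/- Let 0 < λ ≤ 1/2 and h_λ(y) = y + λ. Let γ = (x,y) : (0,b) → Θ be a maximal orbit of F₁ with γ(s) → (0,1) as s → 0⁺. Then b = ∞, y is strictly decreasing with y(s) → y₀⁺ := (−4λ + √(5−4λ²))/5 as s → ∞ (and y₀⁺ ≥ 0 since λ ≤ 1/2), and x is strictly increasing with x(s) → ∞ as s → ∞. -/
open Filter Set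

/-! ### Auxiliary lemmas on `tanh` -/

lemma my_tanh_eq : Real.tanh = fun x => Real.sinh x / Real.cosh x := by
  funext x; exact Real.tanh_eq_sinh_div_cosh x

lemma my_tanh_pos {x : ℝ} (hx : 0 < x) : 0 < Real.tanh x := by
  rw [Real.tanh_eq_sinh_div_cosh]
  exact div_pos (Real.sinh_pos_iff.2 hx) (Real.cosh_pos _)

lemma my_tanh_lt_one (x : ℝ) : Real.tanh x < 1 := by
  rw [Real.tanh_eq_sinh_div_cosh, div_lt_one (Real.cosh_pos _)]
  nlinarith [Real.cosh_sub_sinh x, Real.exp_pos (-x)]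

lemma my_hasDerivAt_tanh (x : ℝ) : HasDerivAt Real.tanh (1 - Real.tanh x ^ 2) x := by
  have h := (Real.hasDerivAt_sinh x).div (Real.hasDerivAt_cosh x) (ne_of_gt (Real.cosh_pos _))
  rw [my_tanh_eq]
  refine h.congr_deriv ?_
  symm
  show 1 - (Real.sinh x / Real.cosh x) ^ 2 = _
  have hc := Real.cosh_pos x
  field_simp

lemma my_contDiff_tanh : ContDiff ℝ 1 Real.tanh := by
  rw [my_tanh_eq]
  exact Real.contDiff_sinh.div Real.contDiff_cosh (fun x => ne_of_gt (Real.cosh_pos _))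

lemma my_tanh_strictMono : StrictMono Real.tanh := by
  apply strictMono_of_deriv_pos
  intro x
  rw [(my_hasDerivAt_tanh x).deriv]
  nlinarith [my_tanh_lt_one x, my_tanh_lt_one (-x), Real.tanh_neg x]

lemma my_tanh_tendsto_one : Tendsto Real.tanh atTop (nhds 1) := by
  have h : ∀ x : ℝ, Real.tanh x = 1 - 2 * Real.exp (-x) / (Real.exp x + Real.exp (-x)) := by
    intro x
    rw [Real.tanh_eq_sinh_div_cosh, Real.sinh_eq, Real.cosh_eq]
    have : Real.exp x + Real.exp (-x) > 0 := by positivity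
    field_simp
    ring
  rw [funext h]
  have h2 : Tendsto (fun x : ℝ => 2 * Real.exp (-x) / (Real.exp x + Real.exp (-x))) atTop
      (nhds 0) := by
    have hnum : Tendsto (fun x : ℝ => 2 * Real.exp (-x)) atTop (nhds 0) := by
      simpa using (Real.tendsto_exp_neg_atTop_nhds_zero.const_mul 2)
    have hden : Tendsto (fun x : ℝ => Real.exp x + Real.exp (-x)) atTop atTop :=
      tendsto_atTop_mono (fun x => le_add_of_nonneg_right (Real.exp_pos (-x)).le) Real.tendsto_exp_atTop
    simpa using hnum.div_atTop hden
  simpa using (tendsto_const_nhds (x := (1:ℝ))).sub h2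

/-! ### Arithmetic about the root `y₀⁺` -/

lemma y0_nonneg {lam : ℝ} (h0 : 0 < lam) (h1 : lam ≤ 1/2) :
    0 ≤ (-4*lam + Real.sqrt (5-4*lam^2))/5 := by
  have hr0 := Real.sqrt_nonneg (5-4*lam^2)
  have hr2 : Real.sqrt (5-4*lam^2) ^ 2 = 5-4*lam^2 := Real.sq_sqrt (by nlinarith)
  nlinarith [hr2, hr0]

lemma mem_gt_y0 {lam y : ℝ} (h0 : 0 < lam) (h1 : lam ≤ 1/2) (hy1 : y < 1) (hy2 : -1 < y)
    (h : Real.sqrt (1 - y^2) < 2*(y+lam)) :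
    (-4*lam + Real.sqrt (5-4*lam^2))/5 < y := by
  set s := Real.sqrt (1 - y^2) with hs
  set r := Real.sqrt (5-4*lam^2) with hr
  have hs0 : 0 ≤ s := Real.sqrt_nonneg _
  have hs2 : s^2 = 1 - y^2 := Real.sq_sqrt (by nlinarith)
  have hr0 : 0 ≤ r := Real.sqrt_nonneg _
  have hr2 : r^2 = 5-4*lam^2 := Real.sq_sqrt (by nlinarith)
  have hyl : 0 < y + lam := by nlinarith
  have key : (5*y+4*lam)^2 > r^2 := by nlinarith
  have pos : 0 < 5*y+4*lam := by nlinarith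
  have : r < 5*y+4*lam := by nlinarith
  linarith

lemma eq_y0 {lam L : ℝ} (h0 : 0 < lam) (h1 : lam ≤ 1/2) (hL1 : L < 1)
    (hLy0 : (-4*lam + Real.sqrt (5-4*lam^2))/5 ≤ L)
    (heq : 1 - L^2 = 2*(L+lam)*Real.sqrt (1 - L^2)) :
    L = (-4*lam + Real.sqrt (5-4*lam^2))/5 := by
  set r := Real.sqrt (5-4*lam^2) with hr
  have hr0 : 0 ≤ r := Real.sqrt_nonneg _
  have hr2 : r^2 = 5-4*lam^2 := Real.sq_sqrt (by nlinarith)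
  have hL2 : -1 < L := by nlinarith [y0_nonneg h0 h1]
  set s := Real.sqrt (1 - L^2) with hs
  have hs0 : 0 < s := Real.sqrt_pos.2 (by nlinarith)
  have hs2 : s^2 = 1 - L^2 := Real.sq_sqrt (by nlinarith)
  have hseq : s = 2*(L+lam) := by
    have h' : s * s = 2*(L+lam) * s := by nlinarith
    have := mul_right_cancel₀ (ne_of_gt hs0) h'
    linarith [this]
  have key : (5*L+4*lam)^2 = r^2 := by nlinarith
  have hge : r ≤ 5*L+4*lam := by linarith
  have : 5*L+4*lam ≤ r := by nlinarith
  linarith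

/-! ### The phase plane and the vector field -/

lemma mem_PP_iff {p : ℝ × ℝ} :
    p ∈ PhasePlane ↔ 0 < p.1 ∧ -1 < p.2 ∧ p.2 < 1 := by
  simp [PhasePlane, Set.mem_prod, Set.mem_Ioi, Set.mem_Ioo, and_assoc]

lemma isOpen_PP : IsOpen PhasePlane := (isOpen_Ioi).prod (isOpen_Ioo)

lemma F_contDiffAt {lam : ℝ} {p : ℝ × ℝ} (hp : p ∈ PhasePlane) :
    ContDiffAt ℝ 1 (F (fun y => y + lam) 1) p := by
  rw [mem_PP_iff] at hp
  obtain ⟨hx, hy1, hy2⟩ := hp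
  apply ContDiffAt.prodMk
  · exact contDiff_snd.contDiffAt
  · apply ContDiffAt.sub
    · apply ContDiffAt.div
      · exact (contDiff_const.sub (contDiff_snd.pow 2)).contDiffAt
      · exact (my_contDiff_tanh.comp contDiff_fst).contDiffAt
      · exact ne_of_gt (my_tanh_pos hx)
    · have h1 : ContDiffAt ℝ 1 (fun q : ℝ × ℝ => 2 * 1 * (q.2 + lam)) p :=
        (contDiff_const.mul (contDiff_snd.add contDiff_const)).contDiffAt
      have hinner : ContDiffAt ℝ 1 (fun q : ℝ × ℝ => 1 - q.2 ^ 2) p :=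
        (contDiff_const.sub (contDiff_snd.pow 2)).contDiffAt
      have hsq : ContDiffAt ℝ 1 Real.sqrt (1 - p.2 ^ 2) :=
        Real.contDiffAt_sqrt (by nlinarith)
      have h2 : ContDiffAt ℝ 1 (fun q : ℝ × ℝ => Real.sqrt (1 - q.2 ^ 2)) p := hsq.comp p hinner
      exact h1.mul h2

/-- The nullcline function whose positivity region is invariant. -/
noncomputable def Vfun (lam : ℝ) (p : ℝ × ℝ) : ℝ :=
  2 * (p.2 + lam) * Real.tanh p.1 - Real.sqrt (1 - p.2 ^ 2)

lemma hasDerivAt_x {γ : ℝ → ℝ × ℝ} {v : ℝ × ℝ} {s : ℝ} (hd : HasDerivAt γ v s) :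
    HasDerivAt (fun t => (γ t).1) v.1 s :=
  (ContinuousLinearMap.fst ℝ ℝ ℝ).hasFDerivAt.comp_hasDerivAt s hd

lemma hasDerivAt_y {γ : ℝ → ℝ × ℝ} {v : ℝ × ℝ} {s : ℝ} (hd : HasDerivAt γ v s) :
    HasDerivAt (fun t => (γ t).2) v.2 s :=
  (ContinuousLinearMap.snd ℝ ℝ ℝ).hasFDerivAt.comp_hasDerivAt s hd

lemma hasDerivAt_Vcurve {γ : ℝ → ℝ × ℝ} {v : ℝ × ℝ} {s : ℝ} {lam : ℝ}
    (hy1 : -1 < (γ s).2) (hy2 : (γ s).2 < 1) (hd : HasDerivAt γ v s) :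
    HasDerivAt (fun t => Vfun lam (γ t))
      (2 * v.2 * Real.tanh (γ s).1 + 2 * ((γ s).2 + lam) * ((1 - Real.tanh (γ s).1 ^ 2) * v.1)
        + (γ s).2 * v.2 / Real.sqrt (1 - (γ s).2 ^ 2)) s := by
  have hx := hasDerivAt_x hd
  have hy := hasDerivAt_y hd
  have htanh : HasDerivAt (fun t => Real.tanh (γ t).1)
      ((1 - Real.tanh (γ s).1 ^ 2) * v.1) s := (my_hasDerivAt_tanh _).comp s hx
  have hylam : HasDerivAt (fun t => 2 * ((γ t).2 + lam)) (2 * v.2) s :=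
    ((hy.add_const lam).const_mul 2)
  have hprod : HasDerivAt (fun t => 2 * ((γ t).2 + lam) * Real.tanh (γ t).1)
      (2 * v.2 * Real.tanh (γ s).1
        + 2 * ((γ s).2 + lam) * ((1 - Real.tanh (γ s).1 ^ 2) * v.1)) s :=
    hylam.mul htanh
  have hinner : HasDerivAt (fun t => 1 - (γ t).2 ^ 2) (-(2 * (γ s).2 * v.2)) s := by
    have := (hy.pow 2).const_sub 1
    refine this.congr_deriv ?_
    ring
  have hne : 1 - (γ s).2 ^ 2 ≠ 0 := by nlinarith
  have hsqrt : HasDerivAt (fun t => Real.sqrt (1 - (γ t).2 ^ 2))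
      (1 / (2 * Real.sqrt (1 - (γ s).2 ^ 2)) * (-(2 * (γ s).2 * v.2))) s :=
    (Real.hasDerivAt_sqrt hne).comp s hinner
  have hall := hprod.sub hsqrt
  refine hall.congr_deriv ?_
  symm
  have hpos : 0 < Real.sqrt (1 - (γ s).2 ^ 2) := Real.sqrt_pos.2 (by nlinarith)
  field_simp
  ring

lemma F_snd_eq {lam : ℝ} (p : ℝ × ℝ) (hx : 0 < p.1) (hy1 : -1 < p.2) (hy2 : p.2 < 1) :
    (F (fun y => y + lam) 1 p).2
      = -(Real.sqrt (1 - p.2 ^ 2) / Real.tanh p.1) * Vfun lam p := by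
  have ht : Real.tanh p.1 ≠ 0 := ne_of_gt (my_tanh_pos hx)
  have hs2 : Real.sqrt (1 - p.2 ^ 2) ^ 2 = 1 - p.2 ^ 2 := Real.sq_sqrt (by nlinarith)
  show (1 - p.2 ^ 2) / Real.tanh p.1 - 2 * 1 * (p.2 + lam) * Real.sqrt (1 - p.2 ^ 2) = _
  rw [Vfun, ← hs2]
  field_simp
  rw [hs2]
  linear_combination -hs2

lemma V_pos_package {lam : ℝ} {p : ℝ × ℝ} (h0 : 0 < lam) (h1 : lam ≤ 1/2)
    (hp : p ∈ PhasePlane) (hV : 0 < Vfun lam p) :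
    (-4*lam + Real.sqrt (5-4*lam^2))/5 < p.2 ∧ 0 < p.2 ∧ (F (fun y => y + lam) 1 p).2 < 0 := by
  rw [mem_PP_iff] at hp
  obtain ⟨hx, hy1, hy2⟩ := hp
  have hs0 : 0 < Real.sqrt (1 - p.2 ^ 2) := Real.sqrt_pos.2 (by nlinarith)
  have ht0 : 0 < Real.tanh p.1 := my_tanh_pos hx
  have ht1 : Real.tanh p.1 < 1 := my_tanh_lt_one p.1
  rw [Vfun] at hV
  have hyl : 0 < p.2 + lam := by nlinarith
  have hslt : Real.sqrt (1 - p.2 ^ 2) < 2 * (p.2 + lam) := by nlinarith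
  have hgt := mem_gt_y0 h0 h1 hy2 hy1 hslt
  refine ⟨hgt, lt_of_le_of_lt (y0_nonneg h0 h1) hgt, ?_⟩
  rw [F_snd_eq p hx hy1 hy2]
  have : 0 < Real.sqrt (1 - p.2 ^ 2) / Real.tanh p.1 := div_pos hs0 ht0
  rw [Vfun]
  nlinarith

lemma V_nonpos_package {lam : ℝ} {p : ℝ × ℝ} (hp : p ∈ PhasePlane) (hV : Vfun lam p ≤ 0) :
    0 ≤ (F (fun y => y + lam) 1 p).2 := by
  rw [mem_PP_iff] at hp
  obtain ⟨hx, hy1, hy2⟩ := hp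
  have hs0 : 0 < Real.sqrt (1 - p.2 ^ 2) := Real.sqrt_pos.2 (by nlinarith)
  have ht0 : 0 < Real.tanh p.1 := my_tanh_pos hx
  rw [F_snd_eq p hx hy1 hy2]
  have h' : 0 < Real.sqrt (1 - p.2 ^ 2) / Real.tanh p.1 := div_pos hs0 ht0
  nlinarith

/-! ### `EIoo` basics -/

lemma mem_EIoo {b : EReal} {s : ℝ} : s ∈ EIoo 0 b ↔ 0 < s ∧ (s : EReal) < b := by
  constructor
  · rintro ⟨h1, h2⟩
    exact ⟨by exact_mod_cast h1, h2⟩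
  · rintro ⟨h1, h2⟩
    exact ⟨by exact_mod_cast h1, h2⟩

lemma EIoo_top : EIoo 0 ⊤ = Ioi (0:ℝ) := by
  ext s
  rw [mem_EIoo, mem_Ioi]
  simp [EReal.coe_lt_top]

lemma EIoo_coe {B : ℝ} : EIoo 0 (B : EReal) = Ioo 0 B := by
  ext s
  rw [mem_EIoo, mem_Ioo]
  constructor
  · rintro ⟨h1, h2⟩; exact ⟨h1, by exact_mod_cast h2⟩
  · rintro ⟨h1, h2⟩; exact ⟨h1, by exact_mod_cast h2⟩

/-! ### A derivative that converges along a converging function converges to zero -/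

lemma deriv_lim_zero {f w : ℝ → ℝ} {L c : ℝ}
    (hf : ∀ s : ℝ, 1 ≤ s → HasDerivAt f (w s) s)
    (hL : Tendsto f atTop (nhds L)) (hc : Tendsto w atTop (nhds c)) : c = 0 := by
  have key : ∀ n : ℕ, ∃ ξ, ξ ∈ Ioo ((n:ℝ)+1) ((n:ℝ)+2) ∧
      w ξ = (f ((n:ℝ)+2) - f ((n:ℝ)+1)) / (((n:ℝ)+2) - ((n:ℝ)+1)) := by
    intro n
    have h1 : ((n:ℝ)+1) < (n:ℝ)+2 := by linarith
    have hn0 : (0:ℝ) ≤ (n:ℝ) := Nat.cast_nonneg n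
    have hcont : ContinuousOn f (Icc ((n:ℝ)+1) ((n:ℝ)+2)) := fun u hu =>
      ((hf u (by linarith [hu.1])).continuousAt).continuousWithinAt
    have hd : ∀ u ∈ Ioo ((n:ℝ)+1) ((n:ℝ)+2), HasDerivAt f (w u) u := fun u hu =>
      hf u (by linarith [hu.1])
    exact exists_hasDerivAt_eq_slope f w h1 hcont hd
  choose ξ hξmem hξeq using key
  have hξtop : Tendsto ξ atTop atTop := by
    apply tendsto_atTop_mono (fun n => ?_) tendsto_natCast_atTop_atTop
    have := (hξmem n).1
    linarith
  have h1 : Tendsto (fun n => w (ξ n)) atTop (nhds c) := hc.comp hξtop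
  have h2 : Tendsto (fun n => w (ξ n)) atTop (nhds 0) := by
    have e : ∀ n : ℕ, w (ξ n) = f ((n:ℝ)+2) - f ((n:ℝ)+1) := by
      intro n
      rw [hξeq n]
      norm_num
    rw [funext e]
    have ha : Tendsto (fun n : ℕ => f ((n:ℝ)+2)) atTop (nhds L) :=
      hL.comp (tendsto_atTop_add_const_right _ 2 tendsto_natCast_atTop_atTop)
    have hb : Tendsto (fun n : ℕ => f ((n:ℝ)+1)) atTop (nhds L) :=
      hL.comp (tendsto_atTop_add_const_right _ 1 tendsto_natCast_atTop_atTop)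
    simpa using ha.sub hb
  exact tendsto_nhds_unique h1 h2

/-! ### Step 1: the interval is nonempty -/

lemma key_bpos {lam : ℝ} {b : EReal} {γ : ℝ → ℝ × ℝ}
    (horb : IsMaxOrbitOn (fun y => y + lam) 1 γ (EIoo 0 b)) : (0 : EReal) < b := by
  by_contra hb
  push_neg at hb
  have hempty : EIoo 0 b = ∅ := by
    ext s
    simp only [mem_empty_iff_false, iff_false]
    rintro ⟨h1, h2⟩
    exact absurd (lt_of_lt_of_le h2 hb) (not_lt.2 h1.le)
  have hp : ((1:ℝ), (0:ℝ)) ∈ PhasePlane := by rw [mem_PP_iff]; norm_num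
  obtain ⟨f, hf0, ε, hε, hf⟩ :=
    (F_contDiffAt (lam := lam) hp).exists_forall_mem_closedBall_exists_eq_forall_mem_Ioo_hasDerivAt₀ 0
  have hU : ∃ ε' > 0, ε' ≤ ε ∧ ∀ t ∈ Ioo (-ε') ε', f t ∈ PhasePlane := by
    have hcont : ContinuousAt f 0 := (hf 0 (by constructor <;> simp [hε] <;> linarith)).continuousAt
    have : f ⁻¹' PhasePlane ∈ nhds (0:ℝ) := by
      apply hcont.preimage_mem_nhds
      rw [hf0]
      exact isOpen_PP.mem_nhds hp
    obtain ⟨ε'', hε'', hsub⟩ := Metric.mem_nhds_iff.1 this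
    refine ⟨min (ε''/2) ε, by positivity, min_le_right _ _, fun t ht => ?_⟩
    apply hsub
    rw [Metric.mem_ball, Real.dist_eq, sub_zero]
    rw [mem_Ioo] at ht
    rw [abs_lt]
    constructor
    · nlinarith [min_le_left (ε''/2) ε, ht.1]
    · nlinarith [min_le_left (ε''/2) ε, ht.2]
  obtain ⟨ε', hε', hε'le, hmem⟩ := hU
  have horbJ : IsOrbitOn (fun y => y + lam) 1 f (Ioo (-ε') ε') := by
    refine ⟨isOpen_Ioo, ordConnected_Ioo, fun t ht => ⟨hmem t ht, ?_⟩⟩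
    apply hf
    rw [mem_Ioo] at ht ⊢
    constructor <;> [linarith [ht.1, hε'le]; linarith [ht.2, hε'le]]
  have := horb.2 f (Ioo (-ε') ε') horbJ (by rw [hempty]; exact empty_subset _)
    (by rw [hempty]; exact fun u hu => absurd hu (notMem_empty u))
  rw [hempty] at this
  have h0 : (0:ℝ) ∈ Ioo (-ε') ε' := by constructor <;> simp [hε'] <;> linarith
  rw [this] at h0
  exact absurd h0 (notMem_empty 0)

/-! ### Step 2: positivity of `V` along the orbit -/

lemma key_V {lam : ℝ} {b : EReal} {γ : ℝ → ℝ × ℝ} (h0 : 0 < lam) (h1 : lam ≤ 1/2)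
    (horb : IsOrbitOn (fun y => y + lam) 1 γ (EIoo 0 b))
    (hlim : Tendsto γ (nhdsWithin 0 (Set.Ioi 0)) (nhds ((0:ℝ), (1:ℝ)))) :
    ∀ s ∈ EIoo 0 b, 0 < Vfun lam (γ s) := by
  obtain ⟨hopen, hconn, horb'⟩ := horb
  have hmemPP : ∀ s ∈ EIoo 0 b, γ s ∈ PhasePlane := fun s hs => (horb' s hs).1
  have hder : ∀ s ∈ EIoo 0 b, HasDerivAt γ (F (fun y => y + lam) 1 (γ s)) s :=
    fun s hs => (horb' s hs).2
  have hsub : ∀ {t u : ℝ}, t ∈ EIoo 0 b → 0 < u → u ≤ t → u ∈ EIoo 0 b := by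
    intro t u ht hu hut
    rw [mem_EIoo] at ht ⊢
    exact ⟨hu, lt_of_le_of_lt (EReal.coe_le_coe_iff.2 hut) ht.2⟩
  have claimA : ∀ t ∈ EIoo 0 b, ∃ s₀, s₀ ∈ EIoo 0 b ∧ s₀ < t ∧ 0 < Vfun lam (γ s₀) := by
    intro t ht
    by_contra hno
    push_neg at hno
    have ht0 : 0 < t := (mem_EIoo.1 ht).1
    have hmono : MonotoneOn (fun s => (γ s).2) (Ioo 0 t) := by
      apply monotoneOn_of_deriv_nonneg (convex_Ioo 0 t)
      · intro u hu
        exact ((hasDerivAt_y (hder u (hsub ht hu.1 hu.2.le))).continuousAt).continuousWithinAt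
      · intro u hu
        rw [interior_Ioo] at hu
        exact ((hasDerivAt_y (hder u
          (hsub ht hu.1 hu.2.le))).differentiableAt).differentiableWithinAt
      · intro u hu
        rw [interior_Ioo] at hu
        have humem := hsub ht hu.1 hu.2.le
        rw [(hasDerivAt_y (hder u humem)).deriv]
        exact V_nonpos_package (hmemPP u humem) (hno u humem hu.2)
    have hu : t/2 ∈ Ioo 0 t := ⟨by linarith, by linarith⟩
    have hylim : Tendsto (fun s => (γ s).2) (nhdsWithin 0 (Ioi 0)) (nhds 1) :=
      (continuous_snd.tendsto _).comp hlim
    have hle : 1 ≤ (γ (t/2)).2 := by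
      apply le_of_tendsto hylim
      filter_upwards [Ioo_mem_nhdsGT_of_mem (Set.mem_Ico.2 ⟨le_rfl, hu.1⟩)] with v hv
      exact hmono ⟨hv.1, lt_trans hv.2 hu.2⟩ hu hv.2.le
    have := (mem_PP_iff.1 (hmemPP _ (hsub ht hu.1 hu.2.le))).2.2
    linarith
  have claimB : ∀ s₀ ∈ EIoo 0 b, 0 < Vfun lam (γ s₀) →
      ∀ s ∈ EIoo 0 b, s₀ < s → 0 < Vfun lam (γ s) := by
    intro s₀ hs₀ hV0 s hs hlt
    by_contra hc
    push_neg at hc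
    have hIccsub : Icc s₀ s ⊆ EIoo 0 b := fun u hu =>
      hsub hs (lt_of_lt_of_le (mem_EIoo.1 hs₀).1 hu.1) hu.2
    have hVcont : ContinuousOn (fun t => Vfun lam (γ t)) (Icc s₀ s) := by
      intro u hu
      have humem := hIccsub hu
      have hpp := mem_PP_iff.1 (hmemPP u humem)
      exact ((hasDerivAt_Vcurve hpp.2.1 hpp.2.2 (hder u humem)).continuousAt).continuousWithinAt
    set A := Icc s₀ s ∩ (fun t => Vfun lam (γ t)) ⁻¹' (Iic 0) with hA
    have hAclosed : IsClosed A :=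
      hVcont.preimage_isClosed_of_isClosed isClosed_Icc isClosed_Iic
    have hAne : A.Nonempty := ⟨s, ⟨⟨hlt.le, le_rfl⟩, hc⟩⟩
    have hAbdd : BddBelow A := ⟨s₀, fun u hu => hu.1.1⟩
    set s₁ := sInf A with hs₁def
    have hs₁A : s₁ ∈ A := hAclosed.csInf_mem hAne hAbdd
    have hs₁mem : s₁ ∈ EIoo 0 b := hIccsub hs₁A.1
    have hpp1 := mem_PP_iff.1 (hmemPP s₁ hs₁mem)
    have hs₀lt : s₀ < s₁ := by
      rcases eq_or_lt_of_le hs₁A.1.1 with h | h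
      · exfalso; rw [← h] at hs₁A; exact absurd hV0 (not_lt.2 hs₁A.2)
      · exact h
    have hbefore : ∀ u, u ∈ Ico s₀ s₁ → 0 < Vfun lam (γ u) := by
      intro u hu
      by_contra hu'
      push_neg at hu'
      have : u ∈ A := ⟨⟨hu.1, le_trans hu.2.le hs₁A.1.2⟩, hu'⟩
      exact absurd (csInf_le hAbdd this) (not_le.2 hu.2)
    have hIcosub : Ico s₀ s₁ ⊆ Icc s₀ s := fun u hu => ⟨hu.1, le_trans hu.2.le hs₁A.1.2⟩
    have hNB : (nhdsWithin s₁ (Ico s₀ s₁)).NeBot := by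
      rw [← mem_closure_iff_nhdsWithin_neBot, closure_Ico (ne_of_lt hs₀lt)]
      exact ⟨hs₀lt.le, le_rfl⟩
    have htendV : Tendsto (fun t => Vfun lam (γ t)) (nhdsWithin s₁ (Ico s₀ s₁))
        (nhds (Vfun lam (γ s₁))) :=
      ((hVcont s₁ hs₁A.1).tendsto).mono_left (nhdsWithin_mono _ hIcosub)
    have hV1ge : 0 ≤ Vfun lam (γ s₁) :=
      ge_of_tendsto htendV (eventually_nhdsWithin_of_forall (fun u hu => (hbefore u hu).le))
    have hV1 : Vfun lam (γ s₁) = 0 := le_antisymm hs₁A.2 hV1ge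
    have hycont : ContinuousOn (fun t => (γ t).2) (Icc s₀ s) := fun u hu =>
      ((hasDerivAt_y (hder u (hIccsub hu))).continuousAt).continuousWithinAt
    have hyge : (-4*lam + Real.sqrt (5-4*lam^2))/5 ≤ (γ s₁).2 := by
      have htendy : Tendsto (fun t => (γ t).2) (nhdsWithin s₁ (Ico s₀ s₁))
          (nhds ((γ s₁).2)) :=
        ((hycont s₁ hs₁A.1).tendsto).mono_left (nhdsWithin_mono _ hIcosub)
      apply ge_of_tendsto htendy
      apply eventually_nhdsWithin_of_forall
      intro u hu
      exact (V_pos_package h0 h1 (hmemPP u (hIccsub (hIcosub hu))) (hbefore u hu)).1.le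
    have hy1pos : 0 < (γ s₁).2 := by
      rcases eq_or_lt_of_le (le_trans (y0_nonneg h0 h1) hyge) with h | h
      · exfalso
        have hy0 : (γ s₁).2 = 0 := h.symm
        rw [Vfun, hy0] at hV1
        norm_num at hV1
        nlinarith [my_tanh_lt_one (γ s₁).1, my_tanh_pos hpp1.1, hV1]
      · exact h
    have hd1 := hder s₁ hs₁mem
    have hw0 : (F (fun y => y + lam) 1 (γ s₁)).2 = 0 := by
      rw [F_snd_eq _ hpp1.1 hpp1.2.1 hpp1.2.2, hV1, mul_zero]
    have hfst : (F (fun y => y + lam) 1 (γ s₁)).1 = (γ s₁).2 := rfl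
    have hDV := hasDerivAt_Vcurve (lam := lam) hpp1.2.1 hpp1.2.2 hd1
    have hDpos : 0 < 2 * (F (fun y => y + lam) 1 (γ s₁)).2 * Real.tanh (γ s₁).1
        + 2 * ((γ s₁).2 + lam) * ((1 - Real.tanh (γ s₁).1 ^ 2)
            * (F (fun y => y + lam) 1 (γ s₁)).1)
        + (γ s₁).2 * (F (fun y => y + lam) 1 (γ s₁)).2 / Real.sqrt (1 - (γ s₁).2 ^ 2) := by
      rw [hw0, hfst]
      simp only [mul_zero, zero_mul, zero_div, add_zero, zero_add]
      have ht1 := my_tanh_lt_one (γ s₁).1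
      have ht0 := my_tanh_pos hpp1.1
      apply mul_pos (by linarith : (0:ℝ) < 2 * ((γ s₁).2 + lam))
      exact mul_pos (by nlinarith) hy1pos
    have hslope := hasDerivAt_iff_tendsto_slope.1 hDV
    have hslope' : Tendsto (slope (fun t => Vfun lam (γ t)) s₁)
        (nhdsWithin s₁ (Ico s₀ s₁))
        (nhds (2 * (F (fun y => y + lam) 1 (γ s₁)).2 * Real.tanh (γ s₁).1
          + 2 * ((γ s₁).2 + lam) * ((1 - Real.tanh (γ s₁).1 ^ 2)
              * (F (fun y => y + lam) 1 (γ s₁)).1)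
          + (γ s₁).2 * (F (fun y => y + lam) 1 (γ s₁)).2
              / Real.sqrt (1 - (γ s₁).2 ^ 2))) :=
      hslope.mono_left (nhdsWithin_mono _ (fun u hu => ne_of_lt hu.2))
    have hslopele : ∀ u ∈ Ico s₀ s₁, slope (fun t => Vfun lam (γ t)) s₁ u ≤ 0 := by
      intro u hu
      rw [slope_def_field, hV1]
      apply div_nonpos_of_nonneg_of_nonpos
      · simpa using (hbefore u hu).le
      · linarith [hu.2]
    have hDle := le_of_tendsto hslope' (eventually_nhdsWithin_of_forall hslopele)
    linarith
  intro s hs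
  obtain ⟨s₀, hs₀mem, hs₀lt, hs₀V⟩ := claimA s hs
  exact claimB s₀ hs₀mem hs₀V s hs hs₀lt

/-! ### Step 3: the orbit is defined for all positive times -/

lemma key_btop {lam : ℝ} {b : EReal} {γ : ℝ → ℝ × ℝ} (h0 : 0 < lam) (h1 : lam ≤ 1/2)
    (horb : IsMaxOrbitOn (fun y => y + lam) 1 γ (EIoo 0 b))
    (hlim : Tendsto γ (nhdsWithin 0 (Set.Ioi 0)) (nhds ((0:ℝ), (1:ℝ)))) :
    b = ⊤ := by
  by_contra hbt
  have hbpos := key_bpos horb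
  have hVpos := key_V h0 h1 horb.1 hlim
  obtain ⟨⟨hopen, hconn, horb'⟩, hmax⟩ := horb
  have hbne : b ≠ ⊥ := (lt_of_le_of_lt bot_le hbpos).ne'
  set B := b.toReal with hB
  have hbeq : (B : EReal) = b := EReal.coe_toReal hbt hbne
  have hBpos : 0 < B := by
    have h' := hbpos
    rw [← hbeq] at h'
    exact_mod_cast h'
  have hI : EIoo 0 b = Ioo 0 B := by rw [← hbeq]; exact EIoo_coe
  rw [hI] at horb' hVpos hmax
  have hmemPP : ∀ u ∈ Ioo 0 B, γ u ∈ PhasePlane := fun u hu => (horb' u hu).1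
  have hder : ∀ u ∈ Ioo 0 B, HasDerivAt γ (F (fun y => y + lam) 1 (γ u)) u :=
    fun u hu => (horb' u hu).2
  have hPP : ∀ u ∈ Ioo 0 B, 0 < (γ u).1 ∧ -1 < (γ u).2 ∧ (γ u).2 < 1 :=
    fun u hu => mem_PP_iff.1 (hmemPP u hu)
  have hy0 := y0_nonneg h0 h1
  have hygt : ∀ u ∈ Ioo 0 B, (-4*lam + Real.sqrt (5-4*lam^2))/5 < (γ u).2 ∧ 0 < (γ u).2 ∧
      (F (fun y => y + lam) 1 (γ u)).2 < 0 :=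
    fun u hu => V_pos_package h0 h1 (hmemPP u hu) (hVpos u hu)
  -- monotonicity of the coordinates
  have hxmono : StrictMonoOn (fun u => (γ u).1) (Ioo 0 B) := by
    apply strictMonoOn_of_deriv_pos (convex_Ioo 0 B)
    · intro u hu
      exact ((hasDerivAt_x (hder u hu)).continuousAt).continuousWithinAt
    · intro u hu
      rw [interior_Ioo] at hu
      rw [(hasDerivAt_x (hder u hu)).deriv]
      exact (hygt u hu).2.1
  have hyanti : StrictAntiOn (fun u => (γ u).2) (Ioo 0 B) := by
    apply strictAntiOn_of_deriv_neg (convex_Ioo 0 B)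
    · intro u hu
      exact ((hasDerivAt_y (hder u hu)).continuousAt).continuousWithinAt
    · intro u hu
      rw [interior_Ioo] at hu
      rw [(hasDerivAt_y (hder u hu)).deriv]
      exact (hygt u hu).2.2
  set c := B/2 with hcdef
  have hcB : c < B := half_lt_self hBpos
  have hc : c ∈ Ioo 0 B := ⟨by positivity, hcB⟩
  have hsubc : Ioo c B ⊆ Ioo 0 B := fun u hu => ⟨lt_trans hc.1 hu.1, hu.2⟩
  -- x is bounded above on (c,B)
  have hgmono : MonotoneOn (fun t => t - (γ t).1) (Ioo 0 B) := by
    apply monotoneOn_of_deriv_nonneg (convex_Ioo 0 B)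
    · exact (continuous_id.continuousOn).sub
        (fun u hu => ((hasDerivAt_x (hder u hu)).continuousAt).continuousWithinAt)
    · intro u hu
      rw [interior_Ioo] at hu
      exact (((hasDerivAt_id' (x := u)).sub (hasDerivAt_x (hder u hu))).differentiableAt).differentiableWithinAt
    · intro u hu
      rw [interior_Ioo] at hu
      rw [HasDerivAt.deriv (f := fun t => t - (γ t).1) ((hasDerivAt_id' (x := u)).sub (hasDerivAt_x (hder u hu)))]
      have := (hPP u hu).2.2
      have hfst : (F (fun y => y + lam) 1 (γ u)).1 = (γ u).2 := rfl
      rw [hfst]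
      linarith
  have hxbound : ∀ u ∈ Ioo c B, (γ u).1 ≤ (γ c).1 + B := by
    intro u hu
    have := hgmono hc (hsubc hu) hu.1.le
    simp only at this
    have huB := hu.2
    have hc0 := hc.1
    linarith
  have hne : (Ioo c B).Nonempty := nonempty_Ioo.2 hcB
  have hximg : BddAbove ((fun u => (γ u).1) '' Ioo c B) := by
    refine ⟨(γ c).1 + B, ?_⟩
    rintro _ ⟨u, hu, rfl⟩
    exact hxbound u hu
  have hyimg : BddBelow ((fun u => (γ u).2) '' Ioo c B) := by
    refine ⟨(-4*lam + Real.sqrt (5-4*lam^2))/5, ?_⟩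
    rintro _ ⟨u, hu, rfl⟩
    exact (hygt u (hsubc hu)).1.le
  set X := sSup ((fun u => (γ u).1) '' Ioo c B) with hXdef
  set L' := sInf ((fun u => (γ u).2) '' Ioo c B) with hLdef
  have hxlim : Tendsto (fun u => (γ u).1) (nhdsWithin B (Iio B)) (nhds X) :=
    MonotoneOn.tendsto_nhdsWithin_Ioo_left hne ((hxmono.mono hsubc).monotoneOn) hximg
  have hylim' : Tendsto (fun u => (γ u).2) (nhdsWithin B (Iio B)) (nhds L') :=
    AntitoneOn.tendsto_nhdsWithin_Ioo_left hne ((hyanti.mono hsubc).antitoneOn) hyimg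
  set u₀ := (c+B)/2 with hu₀def
  have hu₀ : u₀ ∈ Ioo c B := ⟨by simp only [hu₀def]; linarith, by simp only [hu₀def]; linarith⟩
  have hXpos : 0 < X :=
    lt_of_lt_of_le (hPP u₀ (hsubc hu₀)).1 (le_csSup hximg (mem_image_of_mem _ hu₀))
  have hLge : (-4*lam + Real.sqrt (5-4*lam^2))/5 ≤ L' := by
    apply le_csInf (hne.image _)
    rintro _ ⟨u, hu, rfl⟩
    exact (hygt u (hsubc hu)).1.le
  have hLlt1 : L' < 1 :=
    lt_of_le_of_lt (csInf_le hyimg (mem_image_of_mem _ hu₀)) (hPP u₀ (hsubc hu₀)).2.2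
  have hpinf : ((X, L') : ℝ × ℝ) ∈ PhasePlane := by
    rw [mem_PP_iff]
    exact ⟨hXpos, by simp only; linarith, by simpa using hLlt1⟩
  have hγlim : Tendsto γ (nhdsWithin B (Iio B)) (nhds ((X, L') : ℝ × ℝ)) :=
    hxlim.prodMk_nhds hylim'
  -- Picard–Lindelöf at the limit point
  obtain ⟨f, hfB, ε, hε, hfd⟩ :=
    (F_contDiffAt (lam := lam) hpinf).exists_forall_mem_closedBall_exists_eq_forall_mem_Ioo_hasDerivAt₀ B
  obtain ⟨K, sL, hsLnhds, hK⟩ := (F_contDiffAt (lam := lam) hpinf).exists_lipschitzOnWith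
  set W := sL ∩ PhasePlane with hWdef
  have hWnhds : W ∈ nhds ((X, L') : ℝ × ℝ) := inter_mem hsLnhds (isOpen_PP.mem_nhds hpinf)
  have hfcont : ContinuousAt f B :=
    (hfd B ⟨by linarith, by linarith⟩).continuousAt
  have hfW : ∀ᶠ t in nhds B, f t ∈ W := by
    have : f ⁻¹' W ∈ nhds B := hfcont.preimage_mem_nhds (by rw [hfB]; exact hWnhds)
    exact this
  obtain ⟨ε₁, hε₁, hball⟩ := Metric.eventually_nhds_iff.1 hfW
  have hγW : ∀ᶠ u in nhdsWithin B (Iio B), γ u ∈ W := hγlim.eventually_mem hWnhds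
  obtain ⟨a₀, ha₀B, ha₀⟩ := mem_nhdsLT_iff_exists_Ioo_subset.1 hγW
  set ε₂ := min (min ε ε₁) (min (B - a₀) c) with hε₂def
  have hε₂pos : 0 < ε₂ := by
    apply lt_min (lt_min hε hε₁)
    apply lt_min _ hc.1
    simpa using ha₀B
  have hε₂ε : ε₂ ≤ ε := le_trans (min_le_left _ _) (min_le_left _ _)
  have hε₂ε₁ : ε₂ ≤ ε₁ := le_trans (min_le_left _ _) (min_le_right _ _)
  have hε₂a : ε₂ ≤ B - a₀ := le_trans (min_le_right _ _) (min_le_left _ _)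
  have hε₂c : ε₂ ≤ c := le_trans (min_le_right _ _) (min_le_right _ _)
  have hfmem : ∀ t ∈ Ioo (B-ε₂) (B+ε₂), f t ∈ W := by
    intro t ht
    apply hball
    rw [Real.dist_eq, abs_lt]
    constructor
    · linarith [ht.1]
    · linarith [ht.2]
  have hfder : ∀ t ∈ Ioo (B-ε₂) (B+ε₂), HasDerivAt f (F (fun y => y + lam) 1 (f t)) t := by
    intro t ht
    exact hfd t ⟨by linarith [ht.1], by linarith [ht.2]⟩
  have hγmem : ∀ u ∈ Ioo (B-ε₂) B, γ u ∈ W := by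
    intro u hu
    exact ha₀ ⟨by linarith [hu.1], hu.2⟩
  have hγI : ∀ u ∈ Ioo (B-ε₂) B, u ∈ Ioo 0 B := by
    intro u hu
    refine ⟨?_, hu.2⟩
    have : 0 < B - ε₂ := by
      have := hε₂c
      simp only [hcdef] at this ⊢
      linarith
    linarith [hu.1]
  -- gluing: γ = f on (B-ε₂, B)
  have hglue : ∀ u ∈ Ioo (B-ε₂) B, γ u = f u := by
    intro u hu
    have hBu : 0 < B - u := by linarith [hu.2]
    have hd0 : Tendsto (fun η : ℝ => dist (f (B-η)) (γ (B-η)) * Real.exp (K * B))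
        (nhdsWithin 0 (Ioi 0)) (nhds 0) := by
      have h1 : Tendsto (fun η : ℝ => B - η) (nhdsWithin 0 (Ioi 0)) (nhdsWithin B (Iio B)) := by
        apply tendsto_nhdsWithin_of_tendsto_nhds_of_eventually_within
        · have hc1 : Continuous (fun η : ℝ => B - η) := continuous_const.sub continuous_id
          have := hc1.tendsto 0
          simp only [sub_zero] at this
          exact this.mono_left nhdsWithin_le_nhds
        · filter_upwards [self_mem_nhdsWithin] with η hη
          exact sub_lt_self B hη
      have hf1 : Tendsto (fun η : ℝ => f (B-η)) (nhdsWithin 0 (Ioi 0))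
          (nhds ((X, L') : ℝ × ℝ)) := by
        have := hfcont.tendsto.comp (h1.mono_right nhdsWithin_le_nhds)
        rwa [hfB] at this
      have hγ1 : Tendsto (fun η : ℝ => γ (B-η)) (nhdsWithin 0 (Ioi 0))
          (nhds ((X, L') : ℝ × ℝ)) := hγlim.comp h1
      have := (hf1.dist hγ1).mul_const (Real.exp (K * B))
      simpa using this
    have hKb : ∀ η ∈ Ioo (0:ℝ) (B - u),
        dist (f u) (γ u) ≤ dist (f (B-η)) (γ (B-η)) * Real.exp (K * B) := by
      intro η hη
      have hab : η ≤ B - u := hη.2.le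
      have hrange : ∀ t ∈ Icc η (B-u), B - t ∈ Icc u (B-η) := by
        intro t ht
        exact ⟨by linarith [ht.2], by linarith [ht.1]⟩
      have hrange2 : ∀ t ∈ Icc η (B-u), B - t ∈ Ioo (B-ε₂) B := by
        intro t ht
        have := hrange t ht
        exact ⟨by linarith [this.1, hu.1], by linarith [this.2, hη.1]⟩
      have hv : ∀ t : ℝ, LipschitzOnWith (1*K)
          ((fun _ q => -(F (fun y => y + lam) 1 q)) t) W :=
        fun t => LipschitzWith.id.neg.comp_lipschitzOnWith (hK.mono inter_subset_left)
      have hfc : ContinuousOn (fun t => f (B-t)) (Icc η (B-u)) := by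
        intro t ht
        have h2 : Ioo (B-ε₂) B ⊆ Ioo (B-ε₂) (B+ε₂) := Ioo_subset_Ioo_right (by linarith)
        exact (((hfder _ (h2 (hrange2 t ht))).continuousAt).comp
          ((continuous_const.sub continuous_id).continuousAt)).continuousWithinAt
      have hgc : ContinuousOn (fun t => γ (B-t)) (Icc η (B-u)) := by
        intro t ht
        exact (((hder _ (hγI _ (hrange2 t ht))).continuousAt).comp
          ((continuous_const.sub continuous_id).continuousAt)).continuousWithinAt
      have hfd' : ∀ t ∈ Ico η (B-u), HasDerivWithinAt (fun t => f (B-t))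
          (-(F (fun y => y + lam) 1 (f (B-t)))) (Ici t) t := by
        intro t ht
        have h2 : Ioo (B-ε₂) B ⊆ Ioo (B-ε₂) (B+ε₂) := Ioo_subset_Ioo_right (by linarith)
        have hdd : HasDerivAt (fun t : ℝ => B - t) (-1) t := by
          simpa using (hasDerivAt_id t).const_sub B
        have := (hfder _ (h2 (hrange2 t (Ico_subset_Icc_self ht)))).scomp t hdd
        simp only [neg_one_smul] at this
        exact this.hasDerivWithinAt
      have hgd' : ∀ t ∈ Ico η (B-u), HasDerivWithinAt (fun t => γ (B-t))
          (-(F (fun y => y + lam) 1 (γ (B-t)))) (Ici t) t := by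
        intro t ht
        have hdd : HasDerivAt (fun t : ℝ => B - t) (-1) t := by
          simpa using (hasDerivAt_id t).const_sub B
        have := (hder _ (hγI _ (hrange2 t (Ico_subset_Icc_self ht)))).scomp t hdd
        simp only [neg_one_smul] at this
        exact this.hasDerivWithinAt
      have hfs : ∀ t ∈ Ico η (B-u), f (B-t) ∈ W := by
        intro t ht
        have h2 : Ioo (B-ε₂) B ⊆ Ioo (B-ε₂) (B+ε₂) := Ioo_subset_Ioo_right (by linarith)
        exact hfmem _ (h2 (hrange2 t (Ico_subset_Icc_self ht)))
      have hgs : ∀ t ∈ Ico η (B-u), γ (B-t) ∈ W := by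
        intro t ht
        exact hγmem _ (hrange2 t (Ico_subset_Icc_self ht))
      have key := dist_le_of_trajectories_ODE_of_mem
        (v := fun _ q => -(F (fun y => y + lam) 1 q)) (s := fun _ => W) (K := 1*K)
        (fun t _ => hv t) hfc hfd' hfs hgc hgd' hgs (le_refl (dist (f (B-η)) (γ (B-η))))
        (B-u) ⟨hab, le_rfl⟩
      have hsub2 : B - (B - u) = u := by ring
      rw [hsub2] at key
      apply le_trans key
      apply mul_le_mul_of_nonneg_left _ dist_nonneg
      apply Real.exp_le_exp.2
      have hK0 : (0:ℝ) ≤ (K:ℝ) := K.coe_nonneg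
      have : ((1*K : NNReal) : ℝ) = (K:ℝ) := by push_cast; ring
      rw [this]
      have : B - u - η ≤ B := by linarith [hu.1, hη.1, hε₂pos, hε₂c, hc.1]
      nlinarith
    have hdle : dist (f u) (γ u) ≤ 0 := by
      apply ge_of_tendsto hd0
      filter_upwards [Ioo_mem_nhdsGT_of_mem (left_mem_Ico.2 hBu)] with η hη
      exact hKb η hη
    have := dist_le_zero.1 hdle
    exact this.symm
  -- construct the extension
  set ε₃ := ε₂/2 with hε₃def
  set δfun : ℝ → ℝ × ℝ := fun u => if u < B then γ u else f u with hδdef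
  have horbJ : IsOrbitOn (fun y => y + lam) 1 δfun (Ioo 0 (B+ε₃)) := by
    refine ⟨isOpen_Ioo, ordConnected_Ioo, fun u hu => ?_⟩
    rcases lt_or_ge u B with hcase | hcase
    · have humem : u ∈ Ioo 0 B := ⟨hu.1, hcase⟩
      have hev : δfun =ᶠ[nhds u] γ := by
        filter_upwards [Iio_mem_nhds hcase] with v hv
        exact if_pos hv
      have hval : δfun u = γ u := if_pos hcase
      constructor
      · rw [hval]; exact hmemPP u humem
      · rw [hval]
        exact hev.hasDerivAt_iff.2 (hder u humem)
    · have hu2 : u ∈ Ioo (B-ε₂) (B+ε₂) := by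
        constructor
        · linarith [hε₂pos, hcase]
        · have := hu.2
          simp only [hε₃def] at this
          linarith
      have hev : δfun =ᶠ[nhds u] f := by
        filter_upwards [Ioo_mem_nhds hu2.1 hu2.2] with v hv
        by_cases hvB : v < B
        · have : δfun v = γ v := if_pos hvB
          rw [this]
          exact hglue v ⟨hv.1, hvB⟩
        · exact if_neg hvB
      have hval : δfun u = f u := if_neg (not_lt.2 hcase)
      constructor
      · rw [hval]; exact (hfmem u hu2).2
      · rw [hval]
        exact hev.hasDerivAt_iff.2 (hfder u hu2)
  have hsubJ : Ioo 0 B ⊆ Ioo 0 (B+ε₃) :=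
    Ioo_subset_Ioo_right (by simp only [hε₃def]; linarith)
  have hEqOn : EqOn δfun γ (Ioo 0 B) := by
    intro u hu
    exact if_pos hu.2
  have hJI := hmax δfun (Ioo 0 (B+ε₃)) horbJ hsubJ hEqOn
  have hBmem : B ∈ Ioo 0 (B+ε₃) := ⟨hBpos, by simp only [hε₃def]; linarith⟩
  rw [hJI] at hBmem
  exact absurd hBmem.2 (lt_irrefl B)

/-- for `0 < λ ≤ 1/2`, the maximal orbit of `F₁` (for `h_λ(y) = y + λ`) on
`(0,b)` emanating from `(0,1)` is defined for all `s > 0`, has strictly decreasing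
`y`-coordinate tending to `y₀⁺ = (−4λ+√(5−4λ²))/5 ≥ 0`, and strictly increasing
`x`-coordinate tending to `∞`. -/
theorem stmt19 (lam : ℝ) (h0 : 0 < lam) (h1 : lam ≤ 1 / 2) (b : EReal) (γ : ℝ → ℝ × ℝ)
    (horb : IsMaxOrbitOn (fun y => y + lam) 1 γ (EIoo 0 b))
    (hlim : Filter.Tendsto γ (nhdsWithin 0 (Set.Ioi 0)) (nhds ((0 : ℝ), (1 : ℝ)))) :
    b = ⊤ ∧
    StrictAntiOn (fun s => (γ s).2) (Set.Ioi 0) ∧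
    Filter.Tendsto (fun s => (γ s).2) Filter.atTop
      (nhds ((-4 * lam + Real.sqrt (5 - 4 * lam ^ 2)) / 5)) ∧
    0 ≤ (-4 * lam + Real.sqrt (5 - 4 * lam ^ 2)) / 5 ∧
    StrictMonoOn (fun s => (γ s).1) (Set.Ioi 0) ∧
    Filter.Tendsto (fun s => (γ s).1) Filter.atTop Filter.atTop := by
  have hbtop := key_btop h0 h1 horb hlim
  subst hbtop
  have hVpos := key_V h0 h1 horb.1 hlim
  obtain ⟨⟨hopen, hconn, horb'⟩, hmax⟩ := horb
  rw [EIoo_top] at horb' hVpos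
  have hmemPP : ∀ u ∈ Ioi (0:ℝ), γ u ∈ PhasePlane := fun u hu => (horb' u hu).1
  have hder : ∀ u ∈ Ioi (0:ℝ), HasDerivAt γ (F (fun y => y + lam) 1 (γ u)) u :=
    fun u hu => (horb' u hu).2
  have hPP : ∀ u ∈ Ioi (0:ℝ), 0 < (γ u).1 ∧ -1 < (γ u).2 ∧ (γ u).2 < 1 :=
    fun u hu => mem_PP_iff.1 (hmemPP u hu)
  have hy0 := y0_nonneg h0 h1
  have hygt : ∀ u ∈ Ioi (0:ℝ), (-4*lam + Real.sqrt (5-4*lam^2))/5 < (γ u).2 ∧ 0 < (γ u).2 ∧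
      (F (fun y => y + lam) 1 (γ u)).2 < 0 :=
    fun u hu => V_pos_package h0 h1 (hmemPP u hu) (hVpos u hu)
  have hxmono : StrictMonoOn (fun s => (γ s).1) (Ioi 0) := by
    apply strictMonoOn_of_deriv_pos (convex_Ioi 0)
    · intro u hu
      exact ((hasDerivAt_x (hder u hu)).continuousAt).continuousWithinAt
    · intro u hu
      rw [interior_Ioi] at hu
      rw [(hasDerivAt_x (hder u hu)).deriv]
      exact (hygt u hu).2.1
  have hyanti : StrictAntiOn (fun s => (γ s).2) (Ioi 0) := by
    apply strictAntiOn_of_deriv_neg (convex_Ioi 0)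
    · intro u hu
      exact ((hasDerivAt_y (hder u hu)).continuousAt).continuousWithinAt
    · intro u hu
      rw [interior_Ioi] at hu
      rw [(hasDerivAt_y (hder u hu)).deriv]
      exact (hygt u hu).2.2
  have hmax1 : ∀ s : ℝ, max s 1 ∈ Ioi (0:ℝ) :=
    fun s => mem_Ioi.2 (lt_of_lt_of_le zero_lt_one (le_max_right _ _))
  -- limit of y
  have hytil_anti : Antitone (fun s => (γ (max s 1)).2) := by
    intro s t hst
    rcases eq_or_lt_of_le (max_le_max hst (le_refl (1:ℝ))) with h | h
    · simp only [h]; exact le_rfl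
    · exact (hyanti (hmax1 s) (hmax1 t) h).le
  have hybdd : BddBelow (range (fun s => (γ (max s 1)).2)) := by
    refine ⟨(-4*lam + Real.sqrt (5-4*lam^2))/5, ?_⟩
    rintro _ ⟨s, rfl⟩
    exact (hygt _ (hmax1 s)).1.le
  have hytil := tendsto_atTop_ciInf hytil_anti hybdd
  set L := ⨅ s : ℝ, (γ (max s 1)).2 with hLdef
  have hmaxev : ∀ᶠ s in atTop, max s (1:ℝ) = s := by
    filter_upwards [eventually_ge_atTop 1] with s hs
    exact max_eq_left hs
  have hylim : Tendsto (fun s => (γ s).2) atTop (nhds L) := by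
    apply hytil.congr'
    filter_upwards [hmaxev] with s hs
    simp only [hs]
  have hLy0 : (-4*lam + Real.sqrt (5-4*lam^2))/5 ≤ L := by
    apply ge_of_tendsto hylim
    filter_upwards [eventually_gt_atTop 0] with s hs
    exact (hygt s hs).1.le
  have hL1 : L < 1 := by
    have hle : L ≤ (γ 2).2 := by
      apply le_of_tendsto hylim
      filter_upwards [eventually_ge_atTop 2] with s hs
      exact (hyanti.antitoneOn (mem_Ioi.mpr (by norm_num))
        (mem_Ioi.mpr (by linarith)) hs)
    exact lt_of_le_of_lt hle (hPP 2 (mem_Ioi.mpr (by norm_num))).2.2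
  have hyges : ∀ s ∈ Ioi (0:ℝ), L ≤ (γ s).2 := by
    intro s hs
    apply le_of_tendsto hylim
    filter_upwards [eventually_ge_atTop s] with t ht
    exact hyanti.antitoneOn hs (lt_of_lt_of_le hs ht) ht
  -- limit of x
  have hxtil_mono : Monotone (fun s => (γ (max s 1)).1) := by
    intro s t hst
    rcases eq_or_lt_of_le (max_le_max hst (le_refl (1:ℝ))) with h | h
    · simp only [h]; exact le_rfl
    · exact (hxmono (hmax1 s) (hmax1 t) h).le
  have hxtop : Tendsto (fun s => (γ s).1) atTop atTop := by
    by_cases hbdd : BddAbove (range (fun s => (γ (max s 1)).1))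
    · exfalso
      have hxtil := tendsto_atTop_ciSup hxtil_mono hbdd
      set X := ⨆ s : ℝ, (γ (max s 1)).1 with hXdef
      have hxlim : Tendsto (fun s => (γ s).1) atTop (nhds X) := by
        apply hxtil.congr'
        filter_upwards [hmaxev] with s hs
        simp only [hs]
      rcases lt_or_ge 0 L with hL | hL
      · -- y ≥ L > 0 forces x → ∞
        have hgm : MonotoneOn (fun s => (γ s).1 - L * s) (Ioi 0) := by
          apply monotoneOn_of_deriv_nonneg (convex_Ioi 0)
          · intro u hu
            exact (((hasDerivAt_x (hder u hu)).sub
              ((hasDerivAt_id' (x := u)).const_mul L)).continuousAt).continuousWithinAt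
          · intro u hu
            rw [interior_Ioi] at hu
            exact (((hasDerivAt_x (hder u hu)).sub
              ((hasDerivAt_id' (x := u)).const_mul L)).differentiableAt).differentiableWithinAt
          · intro u hu
            rw [interior_Ioi] at hu
            rw [HasDerivAt.deriv (f := fun s => (γ s).1 - L * s) ((hasDerivAt_x (hder u hu)).sub
              ((hasDerivAt_id' (x := u)).const_mul L))]
            have hfst : (F (fun y => y + lam) 1 (γ u)).1 = (γ u).2 := rfl
            rw [hfst]
            have := hyges u hu
            simp only [mul_one]
            linarith
        have hxgrow : ∀ᶠ s in atTop, (γ 1).1 - L * 1 + L * s ≤ (γ s).1 := by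
          filter_upwards [eventually_ge_atTop 1] with s hs
          have := hgm (mem_Ioi.mpr (by norm_num)) (mem_Ioi.mpr (by linarith)) hs
          simp only at this
          linarith
        have hLs : Tendsto (fun s : ℝ => (γ 1).1 - L * 1 + L * s) atTop atTop :=
          tendsto_atTop_add_const_left _ _ (Tendsto.const_mul_atTop hL tendsto_id)
        have hxt : Tendsto (fun s => (γ s).1) atTop atTop := tendsto_atTop_mono' _ hxgrow hLs
        exact not_tendsto_nhds_of_tendsto_atTop hxt X hxlim
      · -- L = 0, so λ-balance forces positive limiting slope: contradiction
        have hL0 : L = 0 := le_antisymm hL (le_trans hy0 hLy0)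
        have hXpos : 0 < X := by
          have hle : (γ 1).1 ≤ X := by
            apply ge_of_tendsto hxlim
            filter_upwards [eventually_ge_atTop 1] with s hs
            exact (hxmono.monotoneOn (mem_Ioi.mpr (by norm_num))
              (mem_Ioi.mpr (by linarith)) hs)
          exact lt_of_lt_of_le (hPP 1 (mem_Ioi.mpr (by norm_num))).1 hle
        have ht0 : 0 < Real.tanh X := my_tanh_pos hXpos
        have ht1 : Real.tanh X < 1 := my_tanh_lt_one X
        have htanhlim : Tendsto (fun s => Real.tanh (γ s).1) atTop (nhds (Real.tanh X)) :=
          (my_contDiff_tanh.continuous.tendsto X).comp hxlim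
        have hsqlim : Tendsto (fun s => Real.sqrt (1 - (γ s).2^2)) atTop
            (nhds (Real.sqrt (1 - L^2))) :=
          (Real.continuous_sqrt.tendsto _).comp
            (tendsto_const_nhds.sub ((hylim.pow 2)))
        have hwlim : Tendsto (fun s => (1 - (γ s).2^2)/Real.tanh (γ s).1
            - 2*1*((γ s).2+lam)*Real.sqrt (1 - (γ s).2^2)) atTop
            (nhds ((1 - L^2)/Real.tanh X - 2*1*(L+lam)*Real.sqrt (1 - L^2))) := by
          apply Tendsto.sub
          · exact (tendsto_const_nhds.sub (hylim.pow 2)).div htanhlim (ne_of_gt ht0)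
          · exact (((hylim.add_const lam).const_mul (2*1)).mul hsqlim)
        have hwneg : ∀ᶠ s in atTop, (1 - (γ s).2^2)/Real.tanh (γ s).1
            - 2*1*((γ s).2+lam)*Real.sqrt (1 - (γ s).2^2) ≤ 0 := by
          filter_upwards [eventually_gt_atTop 0] with s hs
          exact ((hygt s hs).2.2).le
        have hle := le_of_tendsto hwlim hwneg
        rw [hL0] at hle
        norm_num [Real.sqrt_one] at hle
        have h1t : 1 < 1 / Real.tanh X := by
          rw [lt_div_iff₀ ht0]
          linarith
        rw [one_div] at h1t
        linarith
    · have hxtop' : Tendsto (fun s => (γ (max s 1)).1) atTop atTop :=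
        tendsto_atTop_atTop_of_monotone' hxtil_mono hbdd
      apply hxtop'.congr'
      filter_upwards [hmaxev] with s hs
      simp only [hs]
  -- the limiting value of y is the root y₀⁺
  have htanhlim : Tendsto (fun s => Real.tanh (γ s).1) atTop (nhds 1) :=
    my_tanh_tendsto_one.comp hxtop
  have hsqlim : Tendsto (fun s => Real.sqrt (1 - (γ s).2^2)) atTop
      (nhds (Real.sqrt (1 - L^2))) :=
    (Real.continuous_sqrt.tendsto _).comp (tendsto_const_nhds.sub ((hylim.pow 2)))
  have hwlim : Tendsto (fun s => (1 - (γ s).2^2)/Real.tanh (γ s).1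
      - 2*1*((γ s).2+lam)*Real.sqrt (1 - (γ s).2^2)) atTop
      (nhds ((1 - L^2)/1 - 2*1*(L+lam)*Real.sqrt (1 - L^2))) := by
    apply Tendsto.sub
    · exact (tendsto_const_nhds.sub (hylim.pow 2)).div htanhlim one_ne_zero
    · exact (((hylim.add_const lam).const_mul (2*1)).mul hsqlim)
  have hyder : ∀ s : ℝ, 1 ≤ s → HasDerivAt (fun s => (γ s).2)
      ((1 - (γ s).2^2)/Real.tanh (γ s).1
        - 2*1*((γ s).2+lam)*Real.sqrt (1 - (γ s).2^2)) s := by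
    intro s hs
    exact hasDerivAt_y (hder s (mem_Ioi.mpr (by linarith)))
  have hczero := deriv_lim_zero hyder hylim hwlim
  have heq : 1 - L^2 = 2*(L+lam)*Real.sqrt (1 - L^2) := by
    rw [div_one] at hczero
    nlinarith [hczero]
  have hLeq := eq_y0 h0 h1 hL1 hLy0 heq
  rw [hLeq] at hylim
  refine ⟨rfl, hyanti, ?_, ?_, hxmono, hxtop⟩
  · exact hylim
  · have := y0_nonneg h0 h1
    linarith
end
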